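/- arXiv:2404.11679 — 3 statements merged into one kernel-verified Lean document; each statement's English description precedes it below -/
import Mathlib

section
/- Let (X,d,μ) be a complete, geodesic metric measure space with μ a C-doubling measure, diam(X)=1 and μ(X)=1, equipped with a multiresolution family 𝓑 with constant A ≥ 1. Then for every ε > 0 there exists a constant K > 0, depending only on ε, C and A (and not on the set E), such that for every set E ⊆ X, the sum of μ(B) over all balls B ∈ 𝓑 satisfying B ∩ E ≠ ∅ and sparse(E,B) ≥ ε is at most K. -/
open Metric MeasureTheory
open scoped Classical ENNReal

noncomputable section

/-- The sparsity of a set `E` in the closed ball `B(c,r)`: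
`sparse(E,B) = sup { dist(x, E ∩ B) : x ∈ B } / r`. -/
def sparseIn {X : Type*} [MetricSpace X] (E : Set X) (c : X) (r : ℝ) : ℝ :=
  (⨆ x : (Metric.closedBall c r), Metric.infDist (x : X) (E ∩ Metric.closedBall c r)) / r

/-- A metric space is geodesic if every pair of points is joined by an isometric
embedding of the interval `[0, d(x,y)]`. -/
def IsGeodesicSpace (X : Type*) [MetricSpace X] : Prop :=
  ∀ x y : X, ∃ f : ℝ → X, f 0 = x ∧ f (dist x y) = y ∧
    ∀ s ∈ Set.Icc (0 : ℝ) (dist x y), ∀ t ∈ Set.Icc (0 : ℝ) (dist x y),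
      dist (f s) (f t) = |s - t|

/-- A `C`-doubling measure: nonzero, finite on balls, and doubling with constant `C`. -/
def IsDoubling {X : Type*} [MetricSpace X] [MeasurableSpace X]
    (μ : MeasureTheory.Measure X) (C : ℝ) : Prop :=
  μ ≠ 0 ∧ (∀ (x : X) (r : ℝ), μ (Metric.closedBall x r) < ⊤) ∧
    ∀ (x : X) (r : ℝ),
      μ (Metric.closedBall x (2 * r)) ≤ ENNReal.ofReal C * μ (Metric.closedBall x r)

/-- An `s`-net: `s`-separated and every point of `X` is within distance `< s` of it. -/
def IsNet {X : Type*} [MetricSpace X] (s : ℝ) (N : Set X) : Prop :=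
  (∀ x ∈ N, ∀ y ∈ N, x ≠ y → s ≤ dist x y) ∧ ∀ z : X, ∃ x ∈ N, dist z x < s


/-!
A ball `B = B(c, r)` of the family with `sparse(E, B) ≥ ε` contains, by the geodesic property,
a hole `H_B = B(p, εr/16)` on which `εr/16 ≤ dist(·, E) ≤ 2r`, and doubling gives
`μ B ≤ C^m μ H_B` with `2^m ≥ 32/ε`. At a point `y` the value `dist(y, E)` pins down the
scale `2^{-k}` of every hole containing `y` up to the factor `2^m`, and at a fixed scale the
centres of those holes are `2^{-k}`-separated points within `A 2^{-k}` of `y`, so by doubling there are at most `C^j`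
of them, where `2^j ≥ 8A + 1`. The holes thus overlap at most `(2m + 1) C^j` times, and
`∑ μ B ≤ C^m ∑ μ H_B ≤ C^m (2m + 1) C^j μ X`.
-/

namespace IsDoubling

variable {X : Type*} [MetricSpace X] [MeasurableSpace X] {μ : Measure X} {C : ℝ}

theorem measure_closedBall_two_pow_mul_le (h : IsDoubling μ C) (x : X) (r : ℝ) (n : ℕ) :
    μ (closedBall x (2 ^ n * r)) ≤ ENNReal.ofReal C ^ n * μ (closedBall x r) := by
  induction n with
  | zero => simp
  | succ n ih =>
    calc μ (closedBall x (2 ^ (n + 1) * r)) = μ (closedBall x (2 * (2 ^ n * r))) := by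
          rw [pow_succ', mul_assoc]
      _ ≤ ENNReal.ofReal C * μ (closedBall x (2 ^ n * r)) := h.2.2 x _
      _ ≤ ENNReal.ofReal C * (ENNReal.ofReal C ^ n * μ (closedBall x r)) := by gcongr
      _ = ENNReal.ofReal C ^ (n + 1) * μ (closedBall x r) := by rw [pow_succ', mul_assoc]

theorem measure_closedBall_le_of_le_two_pow_mul (h : IsDoubling μ C) (x : X) {r R : ℝ} {n : ℕ}
    (hR : R ≤ 2 ^ n * r) : μ (closedBall x R) ≤ ENNReal.ofReal C ^ n * μ (closedBall x r) :=
  (measure_mono (closedBall_subset_closedBall hR)).trans (h.measure_closedBall_two_pow_mul_le x r n)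

theorem measure_closedBall_pos (h : IsDoubling μ C) (x : X) {r : ℝ} (hr : 0 < r) :
    0 < μ (closedBall x r) := by
  refine pos_iff_ne_zero.2 fun h0 => h.1 (Measure.measure_univ_eq_zero.1 ?_)
  have hcover : (Set.univ : Set X) = ⋃ n : ℕ, closedBall x (2 ^ n * r) := by
    refine (Set.eq_univ_of_forall fun y => Set.mem_iUnion.2 ?_).symm
    obtain ⟨n, hn⟩ := pow_unbounded_of_one_lt (dist y x / r) one_lt_two
    exact ⟨n, mem_closedBall.2 ((div_le_iff₀ hr).1 hn.le)⟩
  rw [hcover]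
  exact measure_iUnion_null fun n =>
    le_antisymm ((h.measure_closedBall_two_pow_mul_le x r n).trans (by rw [h0, mul_zero]))
      zero_le

variable [OpensMeasurableSpace X]

/-- The disjoint balls `B(c, s/4)` each carry, up to the factor `C^j`, the mass of the ball
`B(y, R + s/4)` containing all of them. -/
theorem card_le_of_pairwise_le_dist (h : IsDoubling μ C) {F : Finset X} {s R : ℝ} {j : ℕ}
    (y : X) (hs : 0 < s) (hR : 0 ≤ R) (hsep : (F : Set X).Pairwise fun c c' => s ≤ dist c c')
    (hF : ∀ c ∈ F, dist y c ≤ R) (hj : 2 * R + s / 4 ≤ 2 ^ j * (s / 4)) :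
    (F.card : ℝ≥0∞) ≤ ENNReal.ofReal C ^ j := by
  set big := closedBall y (R + s / 4)
  have hbig_pos : 0 < μ big := h.measure_closedBall_pos y (by positivity)
  have hsub : ∀ c ∈ F, closedBall c (s / 4) ⊆ big := fun c hc =>
    closedBall_subset_closedBall' (by rw [dist_comm]; linarith [hF c hc])
  have hbig_le : ∀ c ∈ F, μ big ≤ ENNReal.ofReal C ^ j * μ (closedBall c (s / 4)) := fun c hc =>
    (measure_mono (closedBall_subset_closedBall' (by linarith [hF c hc]))).trans
      (h.measure_closedBall_le_of_le_two_pow_mul c hj)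
  refine (ENNReal.mul_le_mul_iff_left hbig_pos.ne' (h.2.1 y _).ne).1 ?_
  calc (F.card : ℝ≥0∞) * μ big = ∑ _c ∈ F, μ big := by rw [Finset.sum_const, nsmul_eq_mul]
    _ ≤ ∑ c ∈ F, ENNReal.ofReal C ^ j * μ (closedBall c (s / 4)) := Finset.sum_le_sum hbig_le
    _ = ENNReal.ofReal C ^ j * μ (⋃ c ∈ F, closedBall c (s / 4)) := by
      rw [← Finset.mul_sum, measure_biUnion_finset _ fun c _ => measurableSet_closedBall]
      exact hsep.mono' fun c c' hcc' => closedBall_disjoint_closedBall (by linarith)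
    _ ≤ ENNReal.ofReal C ^ j * μ big := by gcongr; exact Set.iUnion₂_subset hsub

theorem tsum_indicator_closedBall_le (h : IsDoubling μ C) {S : Set X} {s R : ℝ} {j : ℕ}
    (hs : 0 < s) (hR : 0 ≤ R) (hsep : S.Pairwise fun c c' => s ≤ dist c c')
    (hj : 2 * R + s / 4 ≤ 2 ^ j * (s / 4)) (y : X) :
    ∑' c : S, (closedBall (c : X) R).indicator 1 y ≤ ENNReal.ofReal C ^ j := by
  rw [ENNReal.tsum_eq_iSup_sum]
  refine iSup_le fun F => ?_
  simp only [Set.indicator_apply, mem_closedBall, Pi.one_apply, Finset.sum_boole]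
  rw [← Finset.card_map (Function.Embedding.subtype _)]
  refine h.card_le_of_pairwise_le_dist y hs hR ?_ ?_ hj
  · exact hsep.mono (by simp +contextual [Set.subset_def])
  · simp

end IsDoubling

theorem tsum_measure_le_of_tsum_indicator_le {α ι : Type*} [MeasurableSpace α] (μ : Measure α)
    {s : ι → Set α} (hs : ∀ i, MeasurableSet (s i)) {M : ℝ≥0∞}
    (hM : ∀ y, ∑' i, (s i).indicator 1 y ≤ M) : ∑' i, μ (s i) ≤ M * μ Set.univ := by
  rw [ENNReal.tsum_eq_iSup_sum]
  refine iSup_le fun F => ?_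
  calc ∑ i ∈ F, μ (s i) = ∫⁻ y, ∑ i ∈ F, (s i).indicator 1 y ∂μ := by
        rw [lintegral_finsetSum _ fun i _ => measurable_one.indicator (hs i)]
        simp only [lintegral_indicator_one (hs _)]
    _ ≤ ∫⁻ _, M ∂μ := lintegral_mono fun y => (ENNReal.sum_le_tsum F).trans (hM y)
    _ = M * μ Set.univ := lintegral_const M

theorem tsum_le_of_le_of_support_spread {g : ℕ → ℝ≥0∞} {M : ℝ≥0∞} {m : ℕ} (hg : ∀ k, g k ≤ M)
    (hspread : ∀ k ∈ g.support, ∀ k' ∈ g.support, k' ≤ k + m) :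
    ∑' k, g k ≤ (2 * m + 1 : ℕ) * M := by
  by_cases h0 : ∀ k, g k = 0
  · simp [h0]
  push Not at h0
  obtain ⟨k₀, hk₀⟩ := h0
  rw [tsum_eq_sum (s := Finset.Icc (k₀ - m) (k₀ + m)) fun k hk => ?_]
  · calc ∑ k ∈ Finset.Icc (k₀ - m) (k₀ + m), g k ≤ ∑ _k ∈ Finset.Icc (k₀ - m) (k₀ + m), M :=
          Finset.sum_le_sum fun k _ => hg k
      _ = (Finset.Icc (k₀ - m) (k₀ + m)).card * M := by rw [Finset.sum_const, nsmul_eq_mul]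
      _ ≤ (2 * m + 1 : ℕ) * M := by gcongr; rw [Nat.card_Icc]; omega
  · by_contra hk0
    have := hspread k₀ hk₀ k hk0
    have := hspread k hk0 k₀ hk₀
    simp only [Finset.mem_Icc] at hk
    omega

theorem IsGeodesicSpace.exists_le_infDist {X : Type*} [MetricSpace X] (hgeo : IsGeodesicSpace X)
    {E : Set X} {c x : X} {R δ : ℝ} (hE : (closedBall c R ∩ E).Nonempty)
    (hx : x ∈ closedBall c R) (hδ : 0 ≤ δ) (hfar : 4 * δ < infDist x (E ∩ closedBall c R)) :
    ∃ p, dist p c ≤ R - δ ∧ δ ≤ infDist p E := by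
  obtain ⟨e, heB, heE⟩ := hE
  have hx' := mem_closedBall.1 hx
  have hδR : 2 * δ ≤ R := by
    have := infDist_le_dist_of_mem (x := x) (show e ∈ E ∩ closedBall c R from ⟨heE, heB⟩)
    linarith [dist_triangle_right x e c, mem_closedBall.1 heB]
  obtain ⟨f, hf0, hfd, hfiso⟩ := hgeo x c
  set t := min (2 * δ) (dist x c)
  have ht : t ∈ Set.Icc 0 (dist x c) := ⟨le_min (by linarith) dist_nonneg, min_le_right _ _⟩
  have hpx : dist (f t) x = t := by
    have := hfiso t ht 0 ⟨le_rfl, dist_nonneg⟩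
    rwa [hf0, sub_zero, abs_of_nonneg ht.1] at this
  have hpc : dist (f t) c ≤ R - δ := by
    have := hfiso t ht _ ⟨dist_nonneg, le_rfl⟩
    rw [hfd, abs_sub_comm, abs_of_nonneg (sub_nonneg.2 ht.2)] at this
    rcases min_cases (2 * δ) (dist x c) with h | h <;> linarith
  refine ⟨f t, hpc, (le_infDist ⟨e, heE⟩).2 fun z hz => ?_⟩
  -- a point of `E` within `δ` of `f t` would lie in `B(c, R)` and within `3δ` of `x`
  by_contra! hzp
  have hzB : z ∈ closedBall c R :=
    mem_closedBall.2 (by linarith [dist_triangle_left z c (f t)])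
  have := infDist_le_dist_of_mem (x := x) (show z ∈ E ∩ closedBall c R from ⟨hz, hzB⟩)
  linarith [dist_triangle x (f t) z, dist_comm x (f t), min_le_left (2 * δ) (dist x c)]

theorem IsGeodesicSpace.exists_le_infDist_of_le_sparseIn {X : Type*} [MetricSpace X]
    (hgeo : IsGeodesicSpace X) {E : Set X} {c : X} {R ε : ℝ} (hR : 0 < R) (hε : 0 < ε)
    (hE : (closedBall c R ∩ E).Nonempty) (hsp : ε ≤ sparseIn E c R) :
    ∃ p, dist p c ≤ R - ε * R / 8 ∧ ε * R / 8 ≤ infDist p E := by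
  have hsup : ε * R / 2 < ⨆ x : closedBall c R, infDist (x : X) (E ∩ closedBall c R) := by
    rw [sparseIn, le_div_iff₀ hR] at hsp
    linarith [mul_pos hε hR]
  have : Nonempty (closedBall c R) := ⟨⟨c, mem_closedBall_self hR.le⟩⟩
  obtain ⟨⟨x, hx⟩, hfar⟩ := exists_lt_of_lt_ciSup hsup
  exact hgeo.exists_le_infDist hE hx (by positivity) (by linarith)

theorem le_add_of_le_two_mul_zpow {ε A : ℝ} {k k' m : ℕ} (hε : 0 < ε) (hA : 0 < A)
    (hm : 32 / ε ≤ 2 ^ m)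
    (h : ε * (A * 2 ^ (-(k : ℤ))) / 16 ≤ 2 * (A * 2 ^ (-(k' : ℤ)))) : k' ≤ k + m := by
  have hb : 0 < (2 : ℝ) ^ (-(k' : ℤ)) := zpow_pos two_pos _
  have h32 : 32 ≤ 2 ^ m * ε := (div_le_iff₀ hε).1 hm
  have hεk : ε * 2 ^ (-(k : ℤ)) ≤ 32 * 2 ^ (-(k' : ℤ)) :=
    le_of_mul_le_mul_left (by linarith) hA
  have hk : (2 : ℝ) ^ (-(k : ℤ)) ≤ 2 ^ ((m : ℤ) + -(k' : ℤ)) := by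
    rw [zpow_add₀ two_ne_zero, zpow_natCast]
    exact le_of_mul_le_mul_left (by linarith [mul_le_mul_of_nonneg_right h32 hb.le]) hε
  have := (zpow_le_zpow_iff_right₀ one_lt_two).1 hk
  omega

theorem IsGeodesicSpace.exists_hole_of_le_sparseIn {X : Type*} [MetricSpace X]
    [MeasurableSpace X] {μ : Measure X} {C : ℝ} (hgeo : IsGeodesicSpace X)
    (hμ : IsDoubling μ C) {E : Set X} {c : X} {R ε : ℝ} {m : ℕ} (hR : 0 < R) (hε : 0 < ε)
    (hm : 32 / ε ≤ 2 ^ m) (hE : (closedBall c R ∩ E).Nonempty) (hsp : ε ≤ sparseIn E c R) :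
    ∃ p, closedBall p (ε * R / 16) ⊆ closedBall c R ∧
      (∀ y ∈ closedBall p (ε * R / 16), ε * R / 16 ≤ infDist y E ∧ infDist y E ≤ 2 * R) ∧
      μ (closedBall c R) ≤ ENNReal.ofReal C ^ m * μ (closedBall p (ε * R / 16)) := by
  obtain ⟨p, hpc, hpE⟩ := hgeo.exists_le_infDist_of_le_sparseIn hR hε hE hsp
  obtain ⟨e, heB, heE⟩ := hE
  have hεR := mul_pos hε hR
  have hsub : closedBall p (ε * R / 16) ⊆ closedBall c R :=
    closedBall_subset_closedBall' (by linarith)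
  refine ⟨p, hsub, fun y hy => ⟨?_, ?_⟩, ?_⟩
  · linarith [infDist_le_infDist_add_dist (x := p) (y := y) (s := E), mem_closedBall'.1 hy]
  · linarith [infDist_le_dist_of_mem (x := y) heE, dist_triangle y c e,
      mem_closedBall.1 (hsub hy), mem_closedBall'.1 heB]
  · refine (measure_mono (closedBall_subset_closedBall' ?_)).trans
      (hμ.measure_closedBall_le_of_le_two_pow_mul p (R := 2 * R) ?_)
    · linarith [dist_comm p c]
    · nlinarith [mul_le_mul_of_nonneg_right ((div_le_iff₀ hε).1 hm) hR.le]

theorem tsum_measure_sparse_closedBall_le {X : Type*} [MetricSpace X] [MeasurableSpace X]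
    [OpensMeasurableSpace X] {μ : Measure X} {C A ε : ℝ} {N : ℕ → Set X} {m j : ℕ}
    (hgeo : IsGeodesicSpace X) (hμ : IsDoubling μ C)
    (hN : ∀ k : ℕ, IsNet ((2 : ℝ) ^ (-(k : ℤ))) (N k)) (hA : 0 < A) (hε : 0 < ε)
    (hm : 32 / ε ≤ 2 ^ m) (hj : 8 * A + 1 ≤ 2 ^ j) (E : Set X) :
    (∑' (k : ℕ) (c : N k),
        if (closedBall (c : X) (A * 2 ^ (-(k : ℤ))) ∩ E).Nonempty ∧
            ε ≤ sparseIn E (c : X) (A * 2 ^ (-(k : ℤ)))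
          then μ (closedBall (c : X) (A * 2 ^ (-(k : ℤ))))
          else 0) ≤
      ENNReal.ofReal C ^ m * ((2 * m + 1 : ℕ) * ENNReal.ofReal C ^ j) * μ Set.univ := by
  set r : ℕ → ℝ := fun k => A * 2 ^ (-(k : ℤ))
  have hr : ∀ k, 0 < r k := fun k => by positivity
  have hole : ∀ k (c : N k), ∃ H : Set X, MeasurableSet H ∧ H ⊆ closedBall (c : X) (r k) ∧
      (∀ y ∈ H, ε * r k / 16 ≤ infDist y E ∧ infDist y E ≤ 2 * r k) ∧
      (if (closedBall (c : X) (r k) ∩ E).Nonempty ∧ ε ≤ sparseIn E c (r k)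
        then μ (closedBall (c : X) (r k)) else 0) ≤ ENNReal.ofReal C ^ m * μ H := by
    intro k c
    split_ifs with hc
    · obtain ⟨p, hp⟩ := hgeo.exists_hole_of_le_sparseIn hμ (hr k) hε hm hc.1 hc.2
      exact ⟨_, measurableSet_closedBall, hp⟩
    · exact ⟨∅, MeasurableSet.empty, Set.empty_subset _, fun y hy => hy.elim, zero_le⟩
  choose H hHmeas hHsub hHdist hHμ using hole
  have hoverlap : ∀ y, ∑' p : Σ k, N k, (H p.1 p.2).indicator 1 y ≤
      (2 * m + 1 : ℕ) * ENNReal.ofReal C ^ j := by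
    intro y
    rw [ENNReal.tsum_sigma']
    refine tsum_le_of_le_of_support_spread (fun k => ?_) fun k hk k' hk' => ?_
    · refine (ENNReal.tsum_le_tsum fun c =>
        Set.indicator_le_indicator_of_subset (hHsub k c) (fun _ => zero_le) y).trans ?_
      refine hμ.tsum_indicator_closedBall_le (zpow_pos two_pos _) (hr k).le
        (fun c hc c' hc' hne => (hN k).1 c hc c' hc' hne) ?_ y
      nlinarith [mul_le_mul_of_nonneg_right hj (zpow_pos (two_pos (α := ℝ)) (-(k : ℤ))).le]
    · obtain ⟨c, hc⟩ := not_forall.1 (mt ENNReal.tsum_eq_zero.2 hk)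
      obtain ⟨c', hc'⟩ := not_forall.1 (mt ENNReal.tsum_eq_zero.2 hk')
      exact le_add_of_le_two_mul_zpow hε hA hm
        ((hHdist k c y (Set.mem_of_indicator_ne_zero hc)).1.trans
          (hHdist k' c' y (Set.mem_of_indicator_ne_zero hc')).2)
  calc _ ≤ ∑' (k : ℕ) (c : N k), ENNReal.ofReal C ^ m * μ (H k c) :=
        ENNReal.tsum_le_tsum fun k => ENNReal.tsum_le_tsum (hHμ k)
    _ = ENNReal.ofReal C ^ m * ∑' p : Σ k, N k, μ (H p.1 p.2) := by
        rw [ENNReal.tsum_sigma']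
        simp_rw [ENNReal.tsum_mul_left]
    _ ≤ _ := by
        rw [mul_assoc]
        gcongr
        exact tsum_measure_le_of_tsum_indicator_le μ (fun p : Σ k, N k => hHmeas p.1 p.2) hoverlap

/-- **Quantitative Metric Density Theorem.** In a complete, geodesic metric measure space
with a `C`-doubling measure, `diam X = 1`, `μ X = 1`, equipped with a multiresolution
family `𝓑 = {B(c, A·2^{-k}) : c ∈ N k}` built on nested `2^{-k}`-nets, for every `ε > 0`
there is `K > 0` depending only on `ε`, `C`, `A`, such that for every set `E ⊆ X` the sum
of `μ(B)` over all balls `B ∈ 𝓑` with `B ∩ E ≠ ∅` and `sparse(E,B) ≥ ε` is at most `K`. -/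
theorem quantitative_metric_density (C A ε : ℝ) (hC : 0 < C) (hA : 1 ≤ A) (hε : 0 < ε) :
    ∃ K : ℝ, 0 < K ∧
      ∀ (X : Type) [MetricSpace X] [CompleteSpace X] [MeasurableSpace X] [BorelSpace X]
        (μ : MeasureTheory.Measure X) (N : ℕ → Set X),
        IsGeodesicSpace X →
        IsDoubling μ C →
        Metric.diam (Set.univ : Set X) = 1 →
        μ Set.univ = 1 →
        (∀ k : ℕ, IsNet ((2 : ℝ) ^ (-(k : ℤ))) (N k)) →
        (∀ k : ℕ, N k ⊆ N (k + 1)) →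
        ∀ E : Set X,
          (∑' (k : ℕ) (c : N k),
              if (Metric.closedBall (c : X) (A * 2 ^ (-(k : ℤ))) ∩ E).Nonempty ∧
                  ε ≤ sparseIn E (c : X) (A * 2 ^ (-(k : ℤ)))
                then μ (Metric.closedBall (c : X) (A * 2 ^ (-(k : ℤ))))
                else 0) ≤ ENNReal.ofReal K := by
  obtain ⟨m, hm⟩ := pow_unbounded_of_one_lt (32 / ε) one_lt_two
  obtain ⟨j, hj⟩ := pow_unbounded_of_one_lt (8 * A + 1) one_lt_two
  refine ⟨C ^ m * ((2 * m + 1 : ℕ) * C ^ j), by positivity, ?_⟩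
  intro X _ _ _ _ μ N hgeo hμ _ hμX hN _ E
  refine (tsum_measure_sparse_closedBall_le hgeo hμ hN (by linarith) hε hm.le hj.le E).trans_eq ?_
  rw [hμX, mul_one, ENNReal.ofReal_mul (by positivity), ENNReal.ofReal_mul (by positivity),
    ENNReal.ofReal_pow hC.le, ENNReal.ofReal_pow hC.le, ENNReal.ofReal_natCast]
end
end

section
/- Let (X,d,μ) be a complete, geodesic metric measure space with μ a C-doubling measure, diam(X)=1 and μ(X)=1. For all α > 0 and ε > 0 there exists r₀ > 0, depending only on α, ε and C, such that for every Borel set E ⊆ X with μ(E) ≥ α there exists a closed ball B of radius r ∈ [r₀, 1] with E ∩ B ≠ ∅ and sparse(E,B) < ε. -/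
open Metric MeasureTheory
open scoped ENNReal

noncomputable section

/-! If `E` were `ε`-sparse in every ball centred on `E` with radius in `[r₀, 1]`, then at
each scale `s = τ ^ n` with `τ = min ε 1 / 8`, geodesics carve into every ball `B(x, s)`,
`x ∈ E`, a hole of radius `τ s` missing the `τ s`-neighbourhood of `E`. A Vitali subfamily
and the doubling bound show that these holes fill a fixed fraction `K⁻¹` (`K = C ^ m`,
`2 ^ m ε ≥ 40`) of the `s`-neighbourhood of `E`, so the neighbourhoods shrink
geometrically in measure: `μ (E_{τ s}) ≤ (1 - K⁻¹) μ (E_s)`. After `N` scales,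
`μ E ≤ (1 - K⁻¹) ^ N < α`, a contradiction. -/

open Set
open scoped NNReal

theorem IsGeodesicSpace.exists_dist_eq_and_dist_eq_sub {X : Type*} [MetricSpace X]
    (hg : IsGeodesicSpace X) (x y : X) {t : ℝ} (ht₀ : 0 ≤ t) (ht : t ≤ dist x y) :
    ∃ z, dist x z = t ∧ dist z y = dist x y - t := by
  obtain ⟨f, hf₀, hfy, hf⟩ := hg x y
  have h₀ : (0 : ℝ) ∈ Icc 0 (dist x y) := ⟨le_rfl, dist_nonneg⟩
  have hd : dist x y ∈ Icc 0 (dist x y) := ⟨dist_nonneg, le_rfl⟩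
  refine ⟨f t, ?_, ?_⟩
  · rw [← hf₀, hf 0 h₀ t ⟨ht₀, ht⟩, zero_sub, abs_neg, abs_of_nonneg ht₀]
  · rw [← hfy, hf t ⟨ht₀, ht⟩ _ hd, hfy, abs_of_nonpos (by linarith), neg_sub]

/-- The centre `y` is found by walking from `x` towards a point `p ∈ B(x, s)` at distance
`> ε s / 2` from `E ∩ B(x, s)` and stopping `ε s / 4` before `p`. -/
theorem IsGeodesicSpace.exists_closedBall_subset_ball_diff_thickening {X : Type*}
    [MetricSpace X] (hg : IsGeodesicSpace X) {E : Set X} {x : X} {ε s : ℝ} (hx : x ∈ E)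
    (hε : 0 < ε) (hs : 0 < s) (hsp : ε ≤ sparseIn E x s) :
    ∃ y, closedBall y (ε * s / 8) ⊆ ball x s \ thickening (ε * s / 8) E := by
  have hεs : 0 < ε * s := mul_pos hε hs
  have hx' : x ∈ E ∩ closedBall x s := ⟨hx, mem_closedBall_self hs.le⟩
  have : Nonempty (closedBall x s) := ⟨⟨x, hx'.2⟩⟩
  obtain ⟨p, hp⟩ : ∃ p : closedBall x s, ε * s / 2 < infDist (p : X) (E ∩ closedBall x s) :=
    exists_lt_of_lt_ciSup ((half_lt_self hεs).trans_le ((le_div_iff₀ hs).1 hsp))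
  have hxp : ε * s / 2 < dist x p :=
    hp.trans_le (dist_comm x (p : X) ▸ infDist_le_dist_of_mem hx')
  have hps : dist x p ≤ s := dist_comm x (p : X) ▸ mem_closedBall.1 p.2
  obtain ⟨y, hxy, hyp⟩ := hg.exists_dist_eq_and_dist_eq_sub x p
    (t := dist x p - ε * s / 4) (by linarith) (by linarith)
  refine ⟨y, fun w hw => ⟨?_, ?_⟩⟩
  · rw [mem_ball]
    linarith [dist_triangle w y x, mem_closedBall.1 hw, dist_comm x y]
  · rw [mem_thickening_iff]
    rintro ⟨z, hz, hwz⟩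
    have hwy := mem_closedBall.1 hw
    have hzB : z ∈ E ∩ closedBall x s := by
      refine ⟨hz, mem_closedBall.2 ?_⟩
      linarith [dist_triangle4 z w y x, dist_comm w z, dist_comm x y]
    have := infDist_le_dist_of_mem (x := (p : X)) hzB
    linarith [dist_triangle4 (p : X) y w z, dist_comm (p : X) y, dist_comm y w, dist_comm w z]

section Doubling

variable {X : Type*} [MetricSpace X] [MeasurableSpace X] {μ : Measure X} {c : ℝ≥0∞}

theorem measure_closedBall_two_pow_mul_le
    (hd : ∀ x r, μ (closedBall x (2 * r)) ≤ c * μ (closedBall x r)) (x : X) (r : ℝ) (n : ℕ) :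
    μ (closedBall x (2 ^ n * r)) ≤ c ^ n * μ (closedBall x r) := by
  induction n with
  | zero => simp
  | succ n ih =>
    calc μ (closedBall x (2 ^ (n + 1) * r)) = μ (closedBall x (2 * (2 ^ n * r))) := by
          rw [pow_succ', mul_assoc]
      _ ≤ c * (c ^ n * μ (closedBall x r)) := (hd x _).trans (by gcongr)
      _ = c ^ (n + 1) * μ (closedBall x r) := by rw [pow_succ', mul_assoc]

theorem measure_closedBall_pos_of_doubling [NeZero μ]
    (hd : ∀ x r, μ (closedBall x (2 * r)) ≤ c * μ (closedBall x r)) (x : X) {r : ℝ}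
    (hr : 0 < r) : 0 < μ (closedBall x r) := by
  refine pos_iff_ne_zero.2 fun h₀ => NeZero.ne μ (Measure.measure_univ_eq_zero.1 ?_)
  have hcover : (univ : Set X) = ⋃ n : ℕ, closedBall x (2 ^ n * r) := by
    refine (eq_univ_of_forall fun z => mem_iUnion.2 ?_).symm
    obtain ⟨n, hn⟩ := pow_unbounded_of_one_lt (dist z x / r) one_lt_two
    exact ⟨n, mem_closedBall.2 ((div_lt_iff₀ hr).1 hn).le⟩
  rw [hcover]
  exact measure_iUnion_null fun n =>
    le_antisymm ((measure_closedBall_two_pow_mul_le hd x r n).trans_eq (by rw [h₀, mul_zero]))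
      bot_le

/-- The holes inside a Vitali subfamily of the balls `B(x, s)` are disjoint, and each enlarged
Vitali ball `B(x, 4 s)` lies in the `2 ^ m`-fold enlargement of its hole. -/
theorem measure_thickening_le_mul_measure_diff [OpensMeasurableSpace X] [SFinite μ] [NeZero μ]
    (hd : ∀ x r, μ (closedBall x (2 * r)) ≤ c * μ (closedBall x r)) {E : Set X} {s ρ : ℝ}
    {m : ℕ} (hρ : 0 < ρ) (hm : 5 * s ≤ 2 ^ m * ρ)
    (hhole : ∀ x ∈ E, ∃ y, closedBall y ρ ⊆ ball x s \ thickening ρ E) :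
    μ (thickening s E) ≤ c ^ m * μ (thickening s E \ thickening ρ E) := by
  choose! y hy using hhole
  obtain ⟨u, huE, hdisj, hcov⟩ := Vitali.exists_disjoint_subfamily_covering_enlargement_closedBall
    E id (fun _ => s) s (fun _ _ => le_rfl) 4 (by norm_num)
  have hhole_disj : u.PairwiseDisjoint fun j => closedBall (y j) ρ := fun i hi j hj hij =>
    (hdisj hi hj hij).mono ((hy i (huE hi)).trans (sdiff_subset.trans ball_subset_closedBall))
      ((hy j (huE hj)).trans (sdiff_subset.trans ball_subset_closedBall))
  have hu : u.Countable := by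
    have := Measure.countable_meas_pos_of_disjoint_iUnion (μ := μ)
      (As := fun j : u => closedBall (y j) ρ) (fun _ => measurableSet_closedBall)
      fun i j hij => hhole_disj i.2 j.2 (Subtype.coe_injective.ne hij)
    simp only [measure_closedBall_pos_of_doubling hd _ hρ, ofPred_true] at this
    exact Set.countable_coe_iff.1 (Set.countable_univ_iff.1 this)
  have hcover : thickening s E ⊆ ⋃ j ∈ u, closedBall j (4 * s) := by
    intro z hz
    obtain ⟨e, he, hze⟩ := mem_thickening_iff.1 hz
    obtain ⟨j, hj, hsub⟩ := hcov e he
    exact mem_biUnion hj (hsub (mem_closedBall.2 hze.le))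
  have henlarge : ∀ j ∈ u, closedBall j (4 * s) ⊆ closedBall (y j) (2 ^ m * ρ) := by
    intro j hj w hw
    have hyj : dist (y j) j < s := mem_ball.1 ((hy j (huE hj)) (mem_closedBall_self hρ.le)).1
    rw [mem_closedBall] at hw ⊢
    linarith [dist_triangle w j (y j), dist_comm j (y j)]
  calc μ (thickening s E) ≤ μ (⋃ j ∈ u, closedBall j (4 * s)) := measure_mono hcover
    _ ≤ ∑' j : u, μ (closedBall (j : X) (4 * s)) := measure_biUnion_le μ hu _
    _ ≤ ∑' j : u, c ^ m * μ (closedBall (y j) ρ) := ENNReal.tsum_le_tsum fun j =>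
          (measure_mono (henlarge j j.2)).trans (measure_closedBall_two_pow_mul_le hd _ _ m)
    _ = c ^ m * μ (⋃ j ∈ u, closedBall (y j) ρ) := by
          rw [ENNReal.tsum_mul_left,
            measure_biUnion hu hhole_disj (fun _ _ => measurableSet_closedBall)]
    _ ≤ c ^ m * μ (thickening s E \ thickening ρ E) := by
          gcongr
          exact iUnion₂_subset fun j hj => (hy j (huE hj)).trans
            (sdiff_subset_sdiff_left (ball_subset_thickening (huE hj) s))

end Doubling

theorem measure_le_one_sub_inv_mul_of_le_mul_measure_diff {X : Type*} [MeasurableSpace X]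
    {μ : Measure X} {s t : Set X} {K : ℝ≥0∞} (hst : s ⊆ t) (hs : NullMeasurableSet s μ)
    (ht : μ t ≠ ∞) (h : μ t ≤ K * μ (t \ s)) : μ s ≤ (1 - K⁻¹) * μ t := by
  have hst' : μ s ≤ μ t := measure_mono hst
  rw [measure_sdiff hst hs (ne_top_of_le_ne_top ht hst')] at h
  rw [ENNReal.sub_mul fun _ _ => ht, one_mul, ← ENNReal.sub_sub_cancel ht hst',
    ← ENNReal.div_eq_inv_mul]
  exact tsub_le_tsub_left (ENNReal.div_le_of_le_mul' h) _

theorem measure_thickening_le_of_le_sparseIn {X : Type*} [MetricSpace X] [MeasurableSpace X]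
    [OpensMeasurableSpace X] {μ : Measure X} [IsFiniteMeasure μ] [NeZero μ] {c : ℝ≥0∞}
    (hg : IsGeodesicSpace X) (hd : ∀ x r, μ (closedBall x (2 * r)) ≤ c * μ (closedBall x r))
    {E : Set X} {ε s : ℝ} {m : ℕ} (hε : 0 < ε) (hε₁ : ε ≤ 1) (hs : 0 < s) (hm : 40 ≤ 2 ^ m * ε)
    (hsp : ∀ x ∈ E, ε ≤ sparseIn E x s) :
    μ (thickening (ε * s / 8) E) ≤ (1 - (c ^ m)⁻¹) * μ (thickening s E) := by
  refine measure_le_one_sub_inv_mul_of_le_mul_measure_diff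
    (thickening_mono (by nlinarith) E) isOpen_thickening.measurableSet.nullMeasurableSet
    (measure_ne_top μ _) (measure_thickening_le_mul_measure_diff hd (by positivity) ?_
      fun x hx => hg.exists_closedBall_subset_ball_diff_thickening hx hε hs (hsp x hx))
  nlinarith

theorem quantitative_metric_density_corollary_general (C α ε : ℝ) (hα : 0 < α)
    (hε : 0 < ε) :
    ∃ r₀ : ℝ, 0 < r₀ ∧
      ∀ (X : Type) [MetricSpace X] [CompleteSpace X] [MeasurableSpace X] [BorelSpace X]
        (μ : MeasureTheory.Measure X),
        IsGeodesicSpace X →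
        IsDoubling μ C →
        Metric.diam (Set.univ : Set X) = 1 →
        μ Set.univ = 1 →
        ∀ E : Set X, MeasurableSet E → ENNReal.ofReal α ≤ μ E →
          ∃ (c : X) (r : ℝ), r₀ ≤ r ∧ r ≤ 1 ∧
            (E ∩ Metric.closedBall c r).Nonempty ∧ sparseIn E c r < ε := by
  set ε' := min ε 1
  have hε' : 0 < ε' := lt_min hε one_pos
  obtain ⟨m, hm⟩ := pow_unbounded_of_one_lt (40 / ε') one_lt_two
  set q : ℝ≥0∞ := 1 - (ENNReal.ofReal C ^ m)⁻¹
  have hq : q < 1 := ENNReal.sub_lt_self ENNReal.one_ne_top one_ne_zero (by simp)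
  obtain ⟨N, hN⟩ := ((ENNReal.tendsto_pow_atTop_nhds_zero_of_lt_one hq).eventually_lt_const
    (ENNReal.ofReal_pos.2 hα)).exists
  have hε'₁ : ε' ≤ 1 := min_le_right ε 1
  set τ := ε' / 8 with hτ_def
  have hτ : τ ≤ 1 := by rw [hτ_def]; linarith
  refine ⟨τ ^ N, by positivity, fun X _ _ _ _ μ hg hd _ hμ E _ hαE => ?_⟩
  have : IsProbabilityMeasure μ := ⟨hμ⟩
  by_contra! hsparse
  have hdecay : ∀ n < N, μ (thickening (τ ^ (n + 1)) E) ≤ q * μ (thickening (τ ^ n) E) := by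
    intro n hn
    have hsp : ∀ x ∈ E, ε' ≤ sparseIn E x (τ ^ n) := fun x hx =>
      (min_le_left ε 1).trans (hsparse x _ (pow_le_pow_of_le_one (by positivity) hτ hn.le)
        (pow_le_one₀ (by positivity) hτ) ⟨x, hx, mem_closedBall_self (by positivity)⟩)
    convert measure_thickening_le_of_le_sparseIn hg hd.2.2 hε' hε'₁
      (by positivity) ((div_le_iff₀ hε').1 hm.le) hsp using 3
    ring
  have hN' : μ (thickening (τ ^ N) E) ≤ q ^ N :=
    (monotone_mul_left_of_nonneg (zero_le : 0 ≤ q)).seq_le_seq N (by simpa using prob_le_one)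
      hdecay fun k _ => (pow_succ' q k).ge
  exact hN.not_ge (hαE.trans ((measure_mono (self_subset_thickening (by positivity) E)).trans hN'))

/-- **Corollary of the Quantitative Metric Density Theorem.** Given `α, ε > 0`, there is
`r₀ > 0` depending only on `α`, `ε`, `C`, such that every Borel set `E` of measure `≥ α`
in a complete geodesic metric measure space with `C`-doubling measure, `diam X = 1`,
`μ X = 1`, meets some closed ball `B` of radius `r ∈ [r₀, 1]` with `sparse(E,B) < ε`. -/
theorem quantitative_metric_density_corollary (C α ε : ℝ) (hC : 0 < C) (hα : 0 < α)
    (hε : 0 < ε) :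
    ∃ r₀ : ℝ, 0 < r₀ ∧
      ∀ (X : Type) [MetricSpace X] [CompleteSpace X] [MeasurableSpace X] [BorelSpace X]
        (μ : MeasureTheory.Measure X),
        IsGeodesicSpace X →
        IsDoubling μ C →
        Metric.diam (Set.univ : Set X) = 1 →
        μ Set.univ = 1 →
        ∀ E : Set X, MeasurableSet E → ENNReal.ofReal α ≤ μ E →
          ∃ (c : X) (r : ℝ), r₀ ≤ r ∧ r ≤ 1 ∧
            (E ∩ Metric.closedBall c r).Nonempty ∧ sparseIn E c r < ε :=
  quantitative_metric_density_corollary_general C α ε hα hε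
end
end

section
/- Given d ∈ ℕ, α > 0 and δ > 0, there exists M ∈ ℕ, depending only on d, α and δ, with the following property: for every set E ⊆ [0,1]^d there exist subsets F₁, F₂, …, F_M, Z of E such that (1) E = F₁ ∪ F₂ ∪ … ∪ F_M ∪ Z; (2) the Lebesgue outer measure of Z is less than α; and (3) for each i ∈ {1,…,M}, F_i is δ-well-connected in E. -/
open Metric MeasureTheory
open scoped ENNReal

noncomputable section

/-- The closed unit cube `[0,1]^d` in Euclidean space. -/
def unitCube (d : ℕ) : Set (EuclideanSpace ℝ (Fin d)) := {x | ∀ i, 0 ≤ x i ∧ x i ≤ 1}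

/-- An `η`-chain from `x` to `y` consisting of points of `E`, of length at most `L`:
a finite list `z 0 = x, …, z m = y` of points of `E` with consecutive distances `< η`
and total length `Σ dist(z i, z (i+1)) ≤ L`. -/
def IsChainFromTo {X : Type*} [MetricSpace X] (η : ℝ) (E : Set X) (x y : X) (L : ℝ) : Prop :=
  ∃ (m : ℕ) (z : ℕ → X), z 0 = x ∧ z m = y ∧ (∀ i ≤ m, z i ∈ E) ∧
    (∀ i < m, dist (z i) (z (i + 1)) < η) ∧
    ∑ i ∈ Finset.range m, dist (z i) (z (i + 1)) ≤ L

/-- `F` is `δ`-well-connected in `E`: every `x, y ∈ F` are joined by a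
`δ·|x-y|`-chain in `E` of length at most `(1+δ)·|x-y|`. -/
def WellConnectedIn {X : Type*} [MetricSpace X] (δ : ℝ) (F E : Set X) : Prop :=
  ∀ x ∈ F, ∀ y ∈ F, IsChainFromTo (δ * dist x y) E x y ((1 + δ) * dist x y)

/-!
Say that `E` has a hole at scale `k` near `x` if a ball of radius `ε 2⁻ᵏ` at distance
`O(d 2⁻ᵏ)` from `x` misses `E`. If `x` has no hole at the scale of `|x - y|`, every point of the
segment `[x, y]` lies within `δ² |x - y| / 8` of `E`, and shadowing the segment gives the chain.

The exceptional set `Z` consists of the points with at least `N` hole scales. A hole makes the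
dyadic cube a few levels coarser, in one of the `2ᵈ` grids shifted by `0` or `1/3` in each
coordinate, contain a subcube on which `E` is null; a stopping-time induction over such vacant
cubes shows that the points of `E` lying in vacant cubes at many levels have outer measure
decaying geometrically in the number of levels, uniformly in `E`.

The other points are coloured by their positions, modulo a fixed integer and in a grid adapted to
each scale, at their hole scales, indexed by residue class, rank and a tier of slightly growing
reaches. Two points of one colour that both had a hole at the scale `k` of their distance would
give `k` the same rank and hence would have the same position at scale `k`, which is impossible.
-/

section Chains

variable {X : Type*} [MetricSpace X] {E : Set X} {x y : X} {η η' L L' : ℝ}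

lemma IsChainFromTo.mono (h : IsChainFromTo η E x y L) (hη : η ≤ η') (hL : L ≤ L') :
    IsChainFromTo η' E x y L' := by
  obtain ⟨m, z, h0, hm, hE, hstep, hlen⟩ := h
  exact ⟨m, z, h0, hm, hE, fun i hi => (hstep i hi).trans_le hη, hlen.trans hL⟩

lemma IsChainFromTo.refl (hx : x ∈ E) (hL : 0 ≤ L) : IsChainFromTo η E x x L :=
  ⟨0, fun _ => x, rfl, rfl, fun _ _ => hx, fun _ h => absurd h (Nat.not_lt_zero _), by simpa⟩

lemma IsChainFromTo.symm (h : IsChainFromTo η E x y L) : IsChainFromTo η E y x L := by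
  obtain ⟨m, z, h0, hm, hE, hstep, hlen⟩ := h
  have hrev : ∀ i < m,
      dist (z (m - i)) (z (m - (i + 1))) = dist (z (m - 1 - i)) (z (m - 1 - i + 1)) := by
    intro i hi
    rw [show m - i = m - 1 - i + 1 by omega, show m - (i + 1) = m - 1 - i by omega, dist_comm]
  refine ⟨m, fun i => z (m - i), by simpa using hm, by simpa using h0,
    fun i _ => hE _ (Nat.sub_le _ _), fun i hi => ?_, ?_⟩
  · exact (hrev i hi).trans_lt (hstep _ (by omega))
  · rw [Finset.sum_congr rfl fun i hi => hrev i (Finset.mem_range.1 hi),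
      Finset.sum_range_reflect (fun j => dist (z j) (z (j + 1))) m]
    exact hlen

lemma WellConnectedIn.mono {δ δ' : ℝ} {F : Set X} (h : WellConnectedIn δ F E) (hδ : δ ≤ δ') :
    WellConnectedIn δ' F E := fun x hx y hy =>
  (h x hx y hy).mono (by gcongr) (by gcongr)

lemma isChainFromTo_of_forall_near {p : ℕ → X} {q : ℕ} {a h : ℝ} (hp0 : p 0 ∈ E) (hpq : p q ∈ E)
    (hh : 0 ≤ h) (hnear : ∀ j ≤ q, ∃ z ∈ E, dist z (p j) ≤ h)
    (hstep : ∀ j < q, dist (p j) (p (j + 1)) ≤ a) (hη : a + 2 * h < η) :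
    IsChainFromTo η E (p 0) (p q) (q * (a + 2 * h)) := by
  classical
  choose g hgE hgp using hnear
  set z : ℕ → X := fun j => if hj : 0 < j ∧ j < q then g j hj.2.le else p j
  have hzE : ∀ j ≤ q, z j ∈ E := by
    intro j hj
    by_cases hj' : 0 < j ∧ j < q
    · simpa [z, hj'] using hgE j hj
    · obtain rfl | rfl : j = 0 ∨ j = q := by omega
      all_goals simpa [z, hj']
  have hzp : ∀ j ≤ q, dist (z j) (p j) ≤ h := by
    intro j hj
    by_cases hj' : 0 < j ∧ j < q
    · simpa [z, hj'] using hgp j hj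
    · simpa [z, hj'] using hh
  have hgap : ∀ j < q, dist (z j) (z (j + 1)) ≤ a + 2 * h := fun j hj =>
    calc dist (z j) (z (j + 1))
        ≤ dist (z j) (p j) + dist (p j) (p (j + 1)) + dist (z (j + 1)) (p (j + 1)) := by
          rw [dist_comm (z (j + 1))]; exact dist_triangle4 _ _ _ _
      _ ≤ h + a + h := by gcongr <;> first | exact hzp _ (by omega) | exact hstep j hj
      _ = a + 2 * h := by ring
  refine ⟨q, z, by simp [z], by simp [z], hzE, fun j hj => (hgap j hj).trans_lt hη, ?_⟩
  calc ∑ j ∈ Finset.range q, dist (z j) (z (j + 1)) ≤ ∑ _j ∈ Finset.range q, (a + 2 * h) :=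
        Finset.sum_le_sum fun j hj => hgap j (Finset.mem_range.1 hj)
    _ = q * (a + 2 * h) := by rw [Finset.sum_const, Finset.card_range, nsmul_eq_mul]

end Chains

lemma isChainFromTo_of_forall_near_closedBall {V : Type*} [NormedAddCommGroup V]
    [NormedSpace ℝ V] {E : Set V} {x y : V} {δ : ℝ} (hδ : 0 < δ) (hδ1 : δ ≤ 1) (hxy : x ≠ y)
    (hx : x ∈ E) (hy : y ∈ E)
    (hnear : ∀ p ∈ closedBall x (dist x y), ∃ z ∈ E, dist z p ≤ δ ^ 2 / 8 * dist x y) :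
    IsChainFromTo (δ * dist x y) E x y ((1 + δ) * dist x y) := by
  set D := dist x y
  have hD : 0 < D := dist_pos.2 hxy
  set q := ⌈2 / δ⌉₊
  have hq : 2 / δ ≤ q := Nat.le_ceil _
  have hq' : (q : ℝ) ≤ 3 / δ := by
    have := Nat.ceil_lt_add_one (by positivity : 0 ≤ 2 / δ)
    have : 1 ≤ 1 / δ := by rw [le_div_iff₀ hδ]; linarith
    linarith [show 2 / δ + 1 / δ = 3 / δ by ring]
  have hq0 : (0 : ℝ) < q := lt_of_lt_of_le (by positivity) hq
  set p : ℕ → V := fun j => AffineMap.lineMap x y ((j : ℝ) / q)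
  have hp0 : p 0 = x := by simp [p]
  have hpq : p q = y := by simp [p, div_self hq0.ne']
  have hstep : ∀ j < q, dist (p j) (p (j + 1)) ≤ D / q := fun j _ => by
    simp only [p, dist_lineMap_lineMap, Real.dist_eq]
    rw [show (j : ℝ) / q - ((j + 1 : ℕ) : ℝ) / q = -(1 / q) by push_cast; ring, abs_neg,
      abs_of_pos (by positivity), one_div_mul_eq_div]
  have hnear' : ∀ j ≤ q, ∃ z ∈ E, dist z (p j) ≤ δ ^ 2 / 8 * D := fun j hj => by
    refine hnear _ ?_
    rw [mem_closedBall, dist_comm, dist_left_lineMap, Real.norm_eq_abs,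
      abs_of_nonneg (by positivity)]
    exact mul_le_of_le_one_left hD.le ((div_le_one hq0).2 (by exact_mod_cast hj))
  have hDq : D / q ≤ δ * D / 2 := by
    rw [div_le_iff₀ hq0]; nlinarith [(div_le_iff₀ hδ).1 hq]
  have hδ2 : δ ^ 2 * D ≤ δ * D := by nlinarith [mul_pos hδ hD]
  have hchain := isChainFromTo_of_forall_near (η := δ * D) (hp0 ▸ hx) (hpq ▸ hy) (by positivity)
    hnear' hstep (by nlinarith [mul_pos hδ hD])
  rw [hp0, hpq] at hchain
  refine hchain.mono le_rfl ?_
  rw [mul_add, mul_div_cancel₀ _ hq0.ne']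
  have : (q : ℝ) * δ ≤ 3 := by rw [← le_div_iff₀ hδ]; exact hq'
  nlinarith [mul_le_mul_of_nonneg_right this (by positivity : 0 ≤ δ * D)]


namespace QuantitativeConnectivity

open Set

local notation "ℝ^" d => EuclideanSpace ℝ (Fin d)

def scale (k : ℕ) : ℝ := (2 ^ k)⁻¹

lemma scale_pos (k : ℕ) : 0 < scale k := by unfold scale; positivity

@[simp] lemma scale_zero : scale 0 = 1 := by simp [scale]

lemma scale_add (k l : ℕ) : scale (k + l) = scale k * scale l := by
  rw [scale, scale, scale, pow_add, mul_inv]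

lemma scale_anti {k l : ℕ} (h : k ≤ l) : scale l ≤ scale k :=
  inv_anti₀ (by positivity) (pow_le_pow_right₀ one_le_two h)

lemma scale_le_one (k : ℕ) : scale k ≤ 1 := by simpa using scale_anti (Nat.zero_le k)

lemma two_pow_mul_scale (k : ℕ) : 2 ^ k * scale k = 1 := mul_inv_cancel₀ (by positivity)

lemma mul_scale_le_one (k : ℕ) : k * scale k ≤ 1 := by
  rw [scale, ← div_eq_mul_inv, div_le_one (by positivity)]
  exact_mod_cast Nat.lt_two_pow_self.le

/-- The dyadic level of a distance `D ∈ (0, 1]`: the largest `k` with `D ≤ 2⁻ᵏ`. -/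
def levelOf (D : ℝ) : ℕ := Nat.log 2 ⌊D⁻¹⌋₊

lemma scale_levelOf_lt {D : ℝ} (hD : 0 < D) : scale (levelOf D) < 2 * D := by
  have hfloor : D⁻¹ < ⌊D⁻¹⌋₊ + 1 := Nat.lt_floor_add_one _
  have hlog : ⌊D⁻¹⌋₊ + 1 ≤ 2 ^ (levelOf D + 1) := Nat.lt_pow_succ_log_self one_lt_two _
  have hlog' : (⌊D⁻¹⌋₊ : ℝ) + 1 ≤ 2 * 2 ^ levelOf D := by
    rw [← pow_succ']; exact_mod_cast hlog
  rw [scale, inv_lt_iff_one_lt_mul₀ (by positivity)]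
  rw [inv_lt_iff_one_lt_mul₀ hD] at hfloor
  nlinarith

lemma le_scale_levelOf {D : ℝ} (hD : 0 < D) (hD1 : D ≤ 1) : D ≤ scale (levelOf D) := by
  have hfloor : 1 ≤ ⌊D⁻¹⌋₊ := Nat.le_floor (by simpa using one_le_inv₀ hD |>.2 hD1)
  have hlog : (2 : ℝ) ^ levelOf D ≤ D⁻¹ :=
    calc (2 : ℝ) ^ levelOf D ≤ ⌊D⁻¹⌋₊ := by exact_mod_cast Nat.pow_log_le_self 2 (by omega)
      _ ≤ D⁻¹ := Nat.floor_le (by positivity)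
  rw [scale, le_inv_comm₀ hD (by positivity)]
  exact hlog

lemma le_scale_levelOf_of_pos {D : ℝ} (h : 0 < levelOf D) : D ≤ scale (levelOf D) := by
  rcases le_or_gt D 0 with hD | hD
  · exact hD.trans (scale_pos _).le
  refine le_scale_levelOf hD (not_lt.1 fun hD1 => ?_)
  have : ⌊D⁻¹⌋₊ ≤ 1 := Nat.floor_le_one_of_le_one (inv_le_one_of_one_le₀ hD1.le)
  have := (Nat.log_pos_iff.1 h).1
  omega

variable {d : ℕ}

lemma abs_sub_le_dist (x y : ℝ^d) (i : Fin d) : |x i - y i| ≤ dist x y :=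
  PiLp.dist_apply_le x y i

lemma dist_le_sqrt_mul {c : ℝ} {x y : ℝ^d} (hc : 0 ≤ c) (h : ∀ i, |x i - y i| ≤ c) :
    dist x y ≤ √d * c := by
  have hsum : ∑ i, dist (x i) (y i) ^ 2 ≤ d * c ^ 2 :=
    calc ∑ i, dist (x i) (y i) ^ 2 ≤ ∑ _i : Fin d, c ^ 2 :=
          Finset.sum_le_sum fun i _ => pow_le_pow_left₀ dist_nonneg (h i) 2
      _ = d * c ^ 2 := by simp
  rw [EuclideanSpace.dist_eq, ← Real.sqrt_sq hc, ← Real.sqrt_mul (Nat.cast_nonneg d)]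
  exact Real.sqrt_le_sqrt hsum

lemma sqrt_le_succ (d : ℕ) : √d ≤ d + 1 :=
  Real.sqrt_le_iff.2 ⟨by positivity, by nlinarith⟩

lemma dist_le_sqrt_of_mem_unitCube {x y : ℝ^d} (hx : x ∈ unitCube d) (hy : y ∈ unitCube d) :
    dist x y ≤ √d := by
  simpa using dist_le_sqrt_mul zero_le_one fun i =>
    abs_sub_le_iff.2 ⟨by linarith [hx i, hy i], by linarith [hx i, hy i]⟩

lemma dist_le_mul_scale_levelOf {x y : ℝ^d} (hx : x ∈ unitCube d) (hy : y ∈ unitCube d) :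
    dist x y ≤ (d + 1) * scale (levelOf (dist x y)) := by
  rcases (levelOf (dist x y)).eq_zero_or_pos with h | h
  · rw [h, scale_zero, mul_one]
    exact (dist_le_sqrt_of_mem_unitCube hx hy).trans (sqrt_le_succ d)
  have := le_scale_levelOf_of_pos h
  nlinarith [scale_pos (levelOf (dist x y)), (Nat.cast_nonneg d : (0 : ℝ) ≤ d)]

def HasHole (E : Set (ℝ^d)) (ε R : ℝ) (k : ℕ) (x : ℝ^d) : Prop :=
  ∃ p, dist x p ≤ R * scale k ∧ Disjoint E (ball p (ε * scale k))

lemma HasHole.mono {E : Set (ℝ^d)} {ε R R' : ℝ} {k : ℕ} {x : ℝ^d} (h : HasHole E ε R k x)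
    (hR : R ≤ R') : HasHole E ε R' k x := by
  obtain ⟨p, hp, hE⟩ := h
  exact ⟨p, hp.trans (by gcongr; exact (scale_pos k).le), hE⟩

lemma HasHole.of_dist_le {E : Set (ℝ^d)} {ε R c : ℝ} {k : ℕ} {x y : ℝ^d}
    (h : HasHole E ε R k x) (hxy : dist x y ≤ c * scale k) : HasHole E ε (R + c) k y := by
  obtain ⟨p, hp, hE⟩ := h
  refine ⟨p, ?_, hE⟩
  calc dist y p ≤ dist x y + dist x p := dist_triangle_left _ _ _
    _ ≤ (R + c) * scale k := by linarith

lemma isChainFromTo_of_not_hasHole {E : Set (ℝ^d)} (hE : E ⊆ unitCube d) {δ : ℝ} (hδ : 0 < δ)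
    (hδ1 : δ ≤ 1) {x y : ℝ^d} (hx : x ∈ E) (hy : y ∈ E) (hxy : x ≠ y)
    (hhole : ¬ HasHole E (δ ^ 2 / 16) (d + 1) (levelOf (dist x y)) x) :
    IsChainFromTo (δ * dist x y) E x y ((1 + δ) * dist x y) := by
  refine isChainFromTo_of_forall_near_closedBall hδ hδ1 hxy hx hy fun p hp => ?_
  have hlevel := scale_levelOf_lt (dist_pos.2 hxy)
  have hnear : ¬ Disjoint E (ball p (δ ^ 2 / 16 * scale (levelOf (dist x y)))) := fun hdisj =>
    hhole ⟨p, (mem_closedBall_comm.1 hp).trans (dist_le_mul_scale_levelOf (hE hx) (hE hy)),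
      hdisj⟩
  obtain ⟨z, hzE, hz⟩ := Set.not_disjoint_iff.1 hnear
  refine ⟨z, hzE, (mem_ball.1 hz).le.trans ?_⟩
  nlinarith [sq_nonneg δ]

/-- Index of the cube of side `2⁻ᵐ` containing `x` in the dyadic grid translated by `v`. -/
def cubeIndex (v : Fin d → ℝ) (m : ℕ) (x : ℝ^d) : Fin d → ℤ := fun i => ⌊2 ^ m * (x i - v i)⌋

def cube (v : Fin d → ℝ) (m : ℕ) (a : Fin d → ℤ) : Set (ℝ^d) := {x | cubeIndex v m x = a}

section Cubes

variable {v : Fin d → ℝ} {m m' : ℕ} {a a' : Fin d → ℤ} {x y : ℝ^d}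

lemma mem_cube_self : x ∈ cube v m (cubeIndex v m x) := rfl

lemma mem_cube_iff :
    x ∈ cube v m a ↔ ∀ i, x i ∈ Ico (v i + a i * scale m) (v i + (a i + 1) * scale m) := by
  change cubeIndex v m x = a ↔ _
  simp only [funext_iff, cubeIndex, mem_Ico]
  have hm : (0 : ℝ) < 2 ^ m := by positivity
  refine forall_congr' fun i => ?_
  rw [Int.floor_eq_iff]
  refine and_congr ?_ ?_
  · rw [← le_sub_iff_add_le', scale, ← div_eq_mul_inv, div_le_iff₀' hm]
  · rw [← sub_lt_iff_lt_add' (a := x i), scale, ← div_eq_mul_inv, lt_div_iff₀' hm]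

lemma cube_eq_preimage (v : Fin d → ℝ) (m : ℕ) (a : Fin d → ℤ) :
    cube v m a = (MeasurableEquiv.toLp 2 (Fin d → ℝ)).symm ⁻¹'
      Set.univ.pi fun i => Ico (v i + a i * scale m) (v i + (a i + 1) * scale m) := by
  ext x
  simp only [mem_cube_iff, Set.mem_preimage, Set.mem_univ_pi]
  rfl

lemma measurableSet_cube (v : Fin d → ℝ) (m : ℕ) (a : Fin d → ℤ) :
    MeasurableSet (cube v m a) := by
  rw [cube_eq_preimage]
  exact (MeasurableEquiv.toLp 2 (Fin d → ℝ)).symm.measurable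
    (MeasurableSet.univ_pi fun _ => measurableSet_Ico)

lemma volume_cube (v : Fin d → ℝ) (m : ℕ) (a : Fin d → ℤ) :
    volume (cube v m a) = ENNReal.ofReal (scale m ^ d) := by
  rw [cube_eq_preimage,
    (EuclideanSpace.volume_preserving_symm_measurableEquiv_toLp (Fin d)).measure_preimage
      (MeasurableSet.univ_pi fun _ => measurableSet_Ico).nullMeasurableSet,
    Real.volume_pi_Ico, ENNReal.ofReal_pow (scale_pos m).le]
  simp [add_mul]

lemma cube_disjoint (h : a ≠ a') : Disjoint (cube v m a) (cube v m a') :=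
  Set.disjoint_left.2 fun _ hx hx' => h (hx.symm.trans hx')

lemma cubeIndex_eq_of_le (h : m ≤ m') (hxy : cubeIndex v m' x = cubeIndex v m' y) :
    cubeIndex v m x = cubeIndex v m y := by
  have coarsen : ∀ z : ℝ^d,
      cubeIndex v m z = fun i => cubeIndex v m' z i / (2 ^ (m' - m) : ℕ) := by
    intro z
    funext i
    rw [cubeIndex, cubeIndex, ← Int.floor_div_natCast]
    congr 1
    rw [Nat.cast_pow, Nat.cast_ofNat, eq_div_iff (by positivity), mul_right_comm, ← pow_add,
      Nat.add_sub_cancel' h]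
  rw [coarsen, coarsen, hxy]

lemma cube_subset_cube (h : m ≤ m') (hx : x ∈ cube v m a) (hx' : x ∈ cube v m' a') :
    cube v m' a' ⊆ cube v m a := fun _ hy =>
  (cubeIndex_eq_of_le h (hy.trans hx'.symm)).trans hx

lemma dist_le_of_mem_cube (hx : x ∈ cube v m a) (hy : y ∈ cube v m a) :
    dist x y ≤ √d * scale m := by
  refine dist_le_sqrt_mul (scale_pos m).le fun i => ?_
  have hxi := mem_cube_iff.1 hx i
  have hyi := mem_cube_iff.1 hy i
  simp only [mem_Ico] at hxi hyi
  exact abs_sub_le_iff.2 ⟨by linarith, by linarith⟩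

lemma ball_subset_cube
    (h : ∀ i, ∃ z : ℤ, 2 ^ m * (x i - v i) ∈ Icc (z + 1 / 6 : ℝ) (z + 5 / 6)) :
    ball x (scale m / 6) ⊆ cube v m (cubeIndex v m x) := by
  intro y hy
  funext i
  obtain ⟨z, hz1, hz2⟩ := h i
  have hyx : |y i - x i| < scale m / 6 := (abs_sub_le_dist y x i).trans_lt hy
  have hscaled : |2 ^ m * (y i - v i) - 2 ^ m * (x i - v i)| < 1 / 6 := by
    rw [← mul_sub, sub_sub_sub_cancel_right, abs_mul, abs_of_pos (by positivity)]
    calc (2 : ℝ) ^ m * |y i - x i| < 2 ^ m * (scale m / 6) := by gcongr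
      _ = 1 / 6 := by rw [← mul_div_assoc, two_pow_mul_scale]
  have hfloor : ∀ t : ℝ, |t - 2 ^ m * (x i - v i)| < 1 / 6 → ⌊t⌋ = z := fun t ht => by
    rw [Int.floor_eq_iff]
    constructor <;> linarith [(abs_lt.1 ht).1, (abs_lt.1 ht).2]
  exact (hfloor _ hscaled).trans (hfloor _ (by simp)).symm

end Cubes

lemma measure_le_mul_of_subset_biUnion {ι α : Type*} [MeasurableSpace α] {μ : Measure α}
    {S : Set ι} (hS : S.Countable) {W Q : Set α} {G C : ι → Set α} {c : ℝ≥0∞}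
    (hW : W ⊆ ⋃ i ∈ S, G i) (hG : ∀ i ∈ S, μ (G i) ≤ c * μ (C i))
    (hC : ∀ i ∈ S, MeasurableSet (C i)) (hdisj : S.PairwiseDisjoint C)
    (hCQ : ∀ i ∈ S, C i ⊆ Q) :
    μ W ≤ c * μ Q :=
  calc μ W ≤ ∑' i : S, μ (G i) := (measure_mono hW).trans (measure_biUnion_le μ hS G)
    _ ≤ ∑' i : S, c * μ (C i) := ENNReal.tsum_le_tsum fun i => hG i i.2
    _ = c * μ (⋃ i ∈ S, C i) := by rw [ENNReal.tsum_mul_left, measure_biUnion hS hdisj hC]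
    _ ≤ c * μ Q := by gcongr; exact iUnion₂_subset hCQ

lemma le_encard_inter_Ioi {A : Set ℕ} {a b n : ℕ} (hA : A ⊆ Ici a)
    (h : ((b + 1 + n : ℕ) : ℕ∞) ≤ A.encard) : (n : ℕ∞) ≤ (A ∩ Ioi (a + b)).encard := by
  have hsplit : A ⊆ Icc a (a + b) ∪ (A ∩ Ioi (a + b)) := fun l hl => by
    by_cases hl' : l ≤ a + b
    · exact Or.inl ⟨hA hl, hl'⟩
    · exact Or.inr ⟨hl, not_le.1 hl'⟩
  have hIcc : (Icc a (a + b)).encard = (b + 1 : ℕ) := by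
    rw [← (finite_Icc a (a + b)).cast_ncard_eq, ncard_Icc_nat]
    congr 1
    omega
  have := h.trans ((encard_le_encard hsplit).trans (encard_union_le _ _))
  rw [hIcc, Nat.cast_add] at this
  exact (ENat.add_le_add_iff_left (ENat.natCast_ne_top _)).1 this

def IsVacant (H : Set (ℝ^d)) (v : Fin d → ℝ) (s m : ℕ) (a : Fin d → ℤ) : Prop :=
  ∃ b, cube v (m + s) b ⊆ cube v m a ∧ volume (H ∩ cube v (m + s) b) = 0

def vacantLevels (H : Set (ℝ^d)) (v : Fin d → ℝ) (s : ℕ) (x : ℝ^d) : Set ℕ :=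
  {l | IsVacant H v s l (cubeIndex v l x)}

def oftenVacant (H : Set (ℝ^d)) (v : Fin d → ℝ) (s m : ℕ) (a : Fin d → ℤ) (n : ℕ) :
    Set (ℝ^d) :=
  {x | x ∈ H ∩ cube v m a ∧ (((s + 1) * n : ℕ) : ℕ∞) ≤ (vacantLevels H v s x ∩ Ioi m).encard}

section Vacancy

variable {H : Set (ℝ^d)} {v : Fin d → ℝ} {s m n : ℕ} {a b : Fin d → ℤ}

lemma volume_cube_diff (h : cube v (m + s) b ⊆ cube v m a) :
    volume (cube v m a \ cube v (m + s) b) =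
      ENNReal.ofReal (1 - scale s ^ d) * volume (cube v m a) := by
  have hs : scale s ^ d ≤ 1 := pow_le_one₀ (scale_pos s).le (scale_le_one s)
  rw [measure_sdiff h (measurableSet_cube _ _ _).nullMeasurableSet
      (by rw [volume_cube]; exact ENNReal.ofReal_ne_top),
    volume_cube, volume_cube, ← ENNReal.ofReal_sub _ (pow_nonneg (scale_pos _).le _),
    ← ENNReal.ofReal_mul (sub_nonneg.2 hs), scale_add, mul_pow]
  ring_nf

/-- Inside a vacant cube, the points of `H` that are still often vacant below the level of its
null subcube live in the other subcubes, which fill a proportion `1 - 2^(-s d)` of it. -/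
lemma volume_setOf_le_of_isVacant {c : ℝ≥0∞}
    (ih : ∀ a, volume (oftenVacant H v s (m + s) a n) ≤ c * volume (cube v (m + s) a))
    (hvac : IsVacant H v s m b) :
    volume {x | x ∈ H ∩ cube v m b ∧
        (((s + 1) * n : ℕ) : ℕ∞) ≤ (vacantLevels H v s x ∩ Ioi (m + s)).encard}
      ≤ c * ENNReal.ofReal (1 - scale s ^ d) * volume (cube v m b) := by
  obtain ⟨h, hsub, hnull⟩ := hvac
  set S := {b' | cube v (m + s) b' ⊆ cube v m b \ cube v (m + s) h}
  have hcover : {x | x ∈ H ∩ cube v m b ∧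
        (((s + 1) * n : ℕ) : ℕ∞) ≤ (vacantLevels H v s x ∩ Ioi (m + s)).encard} ⊆
      (H ∩ cube v (m + s) h) ∪ ⋃ b' ∈ S, oftenVacant H v s (m + s) b' n := by
    rintro x ⟨⟨hxH, hxb⟩, hcount⟩
    by_cases hxh : cubeIndex v (m + s) x = h
    · exact Or.inl ⟨hxH, hxh⟩
    refine Or.inr (mem_biUnion (x := cubeIndex v (m + s) x) ?_ ⟨⟨hxH, mem_cube_self⟩, hcount⟩)
    exact fun y hy => ⟨cube_subset_cube (Nat.le_add_right m s) hxb mem_cube_self hy,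
      fun hy' => hxh (hy.symm.trans hy')⟩
  rw [mul_assoc, ← volume_cube_diff hsub]
  calc _ ≤ volume (H ∩ cube v (m + s) h) +
          volume (⋃ b' ∈ S, oftenVacant H v s (m + s) b' n) :=
        (measure_mono hcover).trans (measure_union_le _ _)
    _ = volume (⋃ b' ∈ S, oftenVacant H v s (m + s) b' n) := by rw [hnull, zero_add]
    _ ≤ _ := measure_le_mul_of_subset_biUnion S.to_countable subset_rfl (fun b' _ => ih b')
        (fun _ _ => measurableSet_cube _ _ _) (fun _ _ _ _ hne => cube_disjoint hne)
        fun _ hb' => hb'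

/-- Of two intersecting such cubes, the coarser would give the points of the finer an earlier
vacant level. -/
lemma pairwiseDisjoint_firstVacant (W : Set (ℝ^d)) (m : ℕ) :
    {p : ℕ × (Fin d → ℤ) | ∃ x ∈ W, x ∈ cube v p.1 p.2 ∧
        IsLeast (vacantLevels H v s x ∩ Ioi m) p.1}.PairwiseDisjoint
      fun p => cube v p.1 p.2 := by
  have key : ∀ p q : ℕ × (Fin d → ℤ), p.1 < q.1 →
      (∃ x ∈ W, x ∈ cube v p.1 p.2 ∧ IsLeast (vacantLevels H v s x ∩ Ioi m) p.1) →
      (∃ x ∈ W, x ∈ cube v q.1 q.2 ∧ IsLeast (vacantLevels H v s x ∩ Ioi m) q.1) →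
      Disjoint (cube v p.1 p.2) (cube v q.1 q.2) := by
    rintro p q hpq ⟨x, -, hxp, hx⟩ ⟨y, -, hyq, hy⟩
    refine Set.disjoint_left.2 fun z hzp hzq => ?_
    have hyp : cubeIndex v p.1 y = p.2 := cube_subset_cube hpq.le hzp hzq hyq
    have hvac : p.1 ∈ vacantLevels H v s y ∩ Ioi m := by
      refine ⟨?_, hx.1.2⟩
      have := hx.1.1
      rwa [vacantLevels, mem_ofPred_eq, hxp, ← hyp] at this
    exact absurd (hy.2 hvac) (not_le.2 hpq)
  intro p hp q hq hne
  rcases lt_trichotomy p.1 q.1 with h | h | h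
  · exact key p q h hp hq
  · have h' : p.2 ≠ q.2 := fun h' => hne (Prod.ext h h')
    change Disjoint (cube v p.1 p.2) (cube v q.1 q.2)
    rw [h]
    exact cube_disjoint h'
  · exact (key q p h hq hp).symm

theorem volume_oftenVacant_le (H : Set (ℝ^d)) (v : Fin d → ℝ) (s n m : ℕ) (a : Fin d → ℤ) :
    volume (oftenVacant H v s m a n) ≤
      ENNReal.ofReal ((1 - scale s ^ d) ^ n) * volume (cube v m a) := by
  induction n generalizing m a with
  | zero => simpa using measure_mono fun x hx => hx.1.2
  | succ n ih =>
    have hκ : 0 ≤ 1 - scale s ^ d := sub_nonneg.2 (pow_le_one₀ (scale_pos s).le (scale_le_one s))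
    rw [pow_succ, ENNReal.ofReal_mul (pow_nonneg hκ n)]
    set W := oftenVacant H v s m a (n + 1)
    refine measure_le_mul_of_subset_biUnion (to_countable _)
      (G := fun p => {x | x ∈ H ∩ cube v p.1 p.2 ∧
        (((s + 1) * n : ℕ) : ℕ∞) ≤ (vacantLevels H v s x ∩ Ioi (p.1 + s)).encard})
      ?_ ?_ (fun _ _ => measurableSet_cube _ _ _)
      (pairwiseDisjoint_firstVacant (H := H) (v := v) (s := s) W m) ?_
    · intro x hxW
      have hcount := hxW.2
      have hne : (vacantLevels H v s x ∩ Ioi m).Nonempty := by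
        rw [← encard_pos]
        exact lt_of_lt_of_le (by norm_cast; positivity) hcount
      have hleast := isLeast_csInf hne
      refine mem_biUnion (x := (sInf (vacantLevels H v s x ∩ Ioi m), cubeIndex v _ x))
        ⟨x, hxW, mem_cube_self, hleast⟩ ⟨⟨hxW.1.1, mem_cube_self⟩, ?_⟩
      refine (le_encard_inter_Ioi (b := s) (fun l hl => hleast.2 hl) ?_).trans
        (encard_le_encard fun l hl => ⟨hl.1.1, hl.2⟩)
      convert hcount using 3
      ring
    · rintro p ⟨x, -, hxp, hx⟩
      refine volume_setOf_le_of_isVacant (fun a => ih _ a) ?_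
      have := hx.1.1
      rwa [vacantLevels, mem_ofPred_eq, hxp] at this
    · rintro p ⟨x, hxW, hxp, hx⟩
      exact cube_subset_cube hx.1.2.le hxW.1.2 hxp

end Vacancy

def offset (σ : Fin d → Bool) : Fin d → ℝ := fun i => if σ i then 1 / 3 else 0

/-- Since `2 ^ m` is never divisible by `3`, shifting by `1/3` moves `2 ^ m t` by a non-integer
multiple of `1/3`, so one of the two shifts keeps it `1/6` away from the integers. -/
lemma exists_shift_mem_Icc (t : ℝ) (m : ℕ) :
    ∃ b : Bool, ∃ z : ℤ,
      2 ^ m * (t - if b then 1 / 3 else 0) ∈ Icc (z + 1 / 6 : ℝ) (z + 5 / 6) := by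
  obtain ⟨j, r, hjr, hr⟩ : ∃ j r : ℕ, 2 ^ m = 3 * j + r ∧ (r = 1 ∨ r = 2) := by
    have : ¬ 3 ∣ 2 ^ m := fun h => by
      have := Nat.Prime.dvd_of_dvd_pow Nat.prime_three h
      omega
    exact ⟨2 ^ m / 3, 2 ^ m % 3, (Nat.div_add_mod _ _).symm, by omega⟩
  have h0 := Int.floor_le ((2 : ℝ) ^ m * t)
  have h1 := Int.lt_floor_add_one ((2 : ℝ) ^ m * t)
  by_cases hmid :
      (⌊(2 : ℝ) ^ m * t⌋ : ℝ) + 1 / 6 ≤ 2 ^ m * t ∧ 2 ^ m * t ≤ ⌊(2 : ℝ) ^ m * t⌋ + 5 / 6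
  · exact ⟨false, _, by simpa using hmid⟩
  have hshift : (2 : ℝ) ^ m * (t - 1 / 3) = 2 ^ m * t - j - r / 3 := by
    rw [show (2 : ℝ) ^ m = 3 * j + r by exact_mod_cast hjr]
    ring
  refine ⟨true, ?_⟩
  simp only [if_true, hshift, mem_Icc]
  rcases not_and_or.1 hmid with h | h <;> push Not at h
  · refine ⟨⌊(2 : ℝ) ^ m * t⌋ - j - 1, ?_⟩
    rcases hr with rfl | rfl <;> push_cast <;> constructor <;> linarith
  · refine ⟨⌊(2 : ℝ) ^ m * t⌋ - j, ?_⟩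
    rcases hr with rfl | rfl <;> push_cast <;> constructor <;> linarith

lemma exists_offset (x : ℝ^d) (m : ℕ) :
    ∃ σ, ∀ i, ∃ z : ℤ, 2 ^ m * (x i - offset σ i) ∈ Icc (z + 1 / 6 : ℝ) (z + 5 / 6) := by
  choose σ hσ using fun i => exists_shift_mem_Icc (x i) m
  exact ⟨σ, hσ⟩

lemma cubeIndex_zero_mem {x : ℝ^d} (hx : x ∈ unitCube d) (σ : Fin d → Bool) :
    cubeIndex (offset σ) 0 x ∈ Fintype.piFinset fun _ => Finset.Icc (-1 : ℤ) 1 := by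
  refine Fintype.mem_piFinset.2 fun i => Finset.mem_Icc.2 ?_
  have hσ : 0 ≤ offset σ i ∧ offset σ i ≤ 1 / 3 := by unfold offset; split_ifs <;> norm_num
  simp only [cubeIndex, pow_zero, one_mul]
  constructor
  · exact Int.le_floor.2 (by push_cast; linarith [(hx i).1])
  · exact Int.floor_le_iff.2 (by push_cast; linarith [(hx i).2])

/-- The hole, within `(R + ε) 2⁻ᵏ ≤ 2^(s₁-k) / 6` of `x`, lies in the cube of `x` at level
`k - s₁` and contains the cube of its centre at level `k + s₂`. -/
lemma isVacant_of_hasHole {E : Set (ℝ^d)} {ε R : ℝ} {v : Fin d → ℝ} {s₁ s₂ k : ℕ} {x : ℝ^d}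
    (hk : s₁ ≤ k) (hs₁ : 6 * (R + ε) ≤ 2 ^ s₁) (hs₂ : √d * scale s₂ < ε)
    (hx : ∀ i, ∃ z : ℤ, 2 ^ (k - s₁) * (x i - v i) ∈ Icc (z + 1 / 6 : ℝ) (z + 5 / 6))
    (hhole : HasHole E ε R k x) : IsVacant E v (s₁ + s₂) (k - s₁) (cubeIndex v (k - s₁) x) := by
  obtain ⟨p, hp, hdisj⟩ := hhole
  have hk' : scale k = scale (k - s₁) * scale s₁ := by rw [← scale_add, Nat.sub_add_cancel hk]
  have hsub : cube v (k - s₁ + (s₁ + s₂)) (cubeIndex v _ p) ⊆ ball p (ε * scale k) :=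
    fun y hy => by
    have hdist := dist_le_of_mem_cube hy mem_cube_self
    rw [show k - s₁ + (s₁ + s₂) = k + s₂ by omega, scale_add] at hdist
    rw [mem_ball]
    nlinarith [scale_pos k]
  refine ⟨_, hsub.trans ((ball_subset_ball' ?_).trans (ball_subset_cube hx)), ?_⟩
  · have hR : (R + ε) * scale s₁ ≤ 1 / 6 := by
      nlinarith [two_pow_mul_scale s₁, scale_pos s₁]
    rw [dist_comm, hk']
    rw [hk'] at hp
    nlinarith [mul_le_mul_of_nonneg_right hR (scale_pos (k - s₁)).le]
  · rw [Set.disjoint_iff_inter_eq_empty.1 (hdisj.mono_right hsub), measure_empty]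

lemma exists_le_encard_inter_preimage {α β : Type*} [Fintype β] [Nonempty β] (f : α → β)
    {A : Set α} {K : ℕ} (h : ((Fintype.card β * K : ℕ) : ℕ∞) ≤ A.encard) :
    ∃ b, (K : ℕ∞) ≤ (A ∩ f ⁻¹' {b}).encard := by
  classical
  obtain ⟨t, hts, htc⟩ := exists_subset_encard_eq h
  have htf := finite_of_encard_eq_coe htc
  rw [htf.encard_eq_coe_toFinset_card, Nat.cast_inj] at htc
  obtain ⟨b, -, hb⟩ := Finset.exists_le_card_fiber_of_mul_le_card_of_maps_to
    (fun a _ => Finset.mem_univ (f a)) Finset.univ_nonempty (n := K) (by rw [htc]; rfl)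
  refine ⟨b, (Nat.cast_le.2 hb).trans ?_⟩
  rw [← encard_coe_eq_coe_finsetCard]
  exact encard_le_encard fun a ha => by
    simp only [Finset.coe_filter, Finite.mem_toFinset, mem_ofPred_eq] at ha
    exact ⟨hts ha.1, ha.2⟩

def holeScales (E : Set (ℝ^d)) (ε R : ℝ) (x : ℝ^d) : Set ℕ := {k | HasHole E ε R k x}

lemma exists_mem_oftenVacant {E : Set (ℝ^d)} {ε R : ℝ} {s₁ s₂ n : ℕ}
    (hs₁ : 6 * (R + ε) ≤ 2 ^ s₁) (hs₂ : √d * scale s₂ < ε) {x : ℝ^d} (hxE : x ∈ E)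
    (hx : ((s₁ + 1 + 2 ^ d * ((s₁ + s₂ + 1) * n) : ℕ) : ℕ∞) ≤ (holeScales E ε R x).encard) :
    ∃ σ, x ∈ oftenVacant E (offset σ) (s₁ + s₂) 0 (cubeIndex (offset σ) 0 x) n := by
  choose σ hσ using exists_offset x
  have hdeep := le_encard_inter_Ioi (a := 0) (fun _ _ => Nat.zero_le _) hx
  rw [zero_add] at hdeep
  obtain ⟨τ, hτ⟩ := exists_le_encard_inter_preimage (fun k => σ (k - s₁))
    (K := (s₁ + s₂ + 1) * n) (by simpa using hdeep)
  refine ⟨τ, ⟨hxE, mem_cube_self⟩, hτ.trans (encard_le_encard_of_injOn (f := (· - s₁)) ?_ ?_)⟩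
  · rintro k ⟨⟨hhole, hk⟩, hkτ⟩
    refine ⟨?_, show 0 < k - s₁ by simp only [mem_Ioi] at hk; omega⟩
    have hgrid := hσ (k - s₁)
    rw [show σ (k - s₁) = τ from hkτ] at hgrid
    exact isVacant_of_hasHole (mem_Ioi.1 hk).le hs₁ hs₂ hgrid hhole
  · intro k hk l hl hkl
    have := hk.1.2; have := hl.1.2
    simp only [mem_Ioi] at *
    omega

theorem exists_volume_setOf_holeScales_lt (d : ℕ) {ε R α : ℝ} (hε : 0 < ε) (hα : 0 < α) :
    ∃ N : ℕ, ∀ E ⊆ unitCube d,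
      volume {x ∈ E | (N : ℕ∞) ≤ (holeScales E ε R x).encard} < ENNReal.ofReal α := by
  obtain ⟨s₁, hs₁⟩ := pow_unbounded_of_one_lt (6 * (R + ε)) one_lt_two
  obtain ⟨s₂, hs₂⟩ : ∃ s₂, √d * scale s₂ < ε := by
    obtain ⟨s₂, hs₂⟩ := pow_unbounded_of_one_lt (√d / ε) one_lt_two
    refine ⟨s₂, ?_⟩
    rw [div_lt_iff₀ hε] at hs₂
    have := two_pow_mul_scale s₂
    nlinarith [scale_pos s₂]
  set s := s₁ + s₂
  have hκ : 0 ≤ 1 - scale s ^ d := sub_nonneg.2 (pow_le_one₀ (scale_pos s).le (scale_le_one s))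
  obtain ⟨n, hn⟩ := exists_pow_lt_of_lt_one (by positivity : 0 < α / 6 ^ d)
    (sub_lt_self 1 (pow_pos (scale_pos s) d))
  refine ⟨s₁ + 1 + 2 ^ d * ((s + 1) * n), fun E hE => ?_⟩
  set A := Fintype.piFinset fun _ : Fin d => Finset.Icc (-1 : ℤ) 1
  have hcover :
      {x ∈ E | ((s₁ + 1 + 2 ^ d * ((s + 1) * n) : ℕ) : ℕ∞) ≤ (holeScales E ε R x).encard} ⊆
        ⋃ σ, ⋃ a ∈ A, oftenVacant E (offset σ) s 0 a n := fun x hx => by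
    obtain ⟨σ, hσ⟩ := exists_mem_oftenVacant hs₁.le hs₂ hx.1 hx.2
    exact mem_iUnion.2 ⟨σ, mem_biUnion (cubeIndex_zero_mem (hE hx.1) σ) hσ⟩
  have hA : A.card = 3 ^ d := by simp [A]
  calc _ ≤ ∑ σ : Fin d → Bool, ∑ a ∈ A, volume (oftenVacant E (offset σ) s 0 a n) :=
        (measure_mono hcover).trans <| (measure_iUnion_fintype_le _ _).trans <|
          Finset.sum_le_sum fun σ _ => measure_biUnion_finset_le _ _
    _ ≤ ∑ _σ : Fin d → Bool, ∑ _a ∈ A, ENNReal.ofReal ((1 - scale s ^ d) ^ n) := by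
        gcongr with σ _ a _
        simpa [volume_cube] using volume_oftenVacant_le E (offset σ) s n 0 a
    _ = ENNReal.ofReal (6 ^ d * (1 - scale s ^ d) ^ n) := by
        have h6 : ((2 ^ d * 3 ^ d : ℕ) : ℝ≥0∞) = ENNReal.ofReal (6 ^ d) := by
          rw [← mul_pow, ← ENNReal.ofReal_natCast]
          norm_num
        simp only [Finset.sum_const, hA, Finset.card_univ, Fintype.card_fun, Fintype.card_bool,
          Fintype.card_fin, nsmul_eq_mul, ← mul_assoc, ← Nat.cast_mul, h6]
        rw [ENNReal.ofReal_mul (by positivity)]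
    _ < ENNReal.ofReal α := by
        rw [ENNReal.ofReal_lt_ofReal_iff hα, ← lt_div_iff₀' (by positivity)]
        exact hn

lemma exists_eq_succ_of_subset_of_card_lt {α : Type*} {D : ℕ → Finset α} {n : ℕ}
    (hD : ∀ t < n, D t ⊆ D (t + 1)) (hn : (D n).card < n) : ∃ t < n, D t = D (t + 1) := by
  by_contra! h
  have hgrow : ∀ t ≤ n, t ≤ (D t).card := by
    intro t ht
    induction t with
    | zero => exact Nat.zero_le _
    | succ t ih =>
      exact (ih (by omega)).trans_lt
        (Finset.card_lt_card (Finset.ssubset_iff_subset_ne.2 ⟨hD t (by omega), h t (by omega)⟩))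
  exact absurd (hgrow n le_rfl) (not_le.2 hn)

lemma floor_eq_floor_of_intCast_eq {a b : ℝ} {L : ℕ} (h : ((⌊a⌋ : ℤ) : ZMod L) = ⌊b⌋)
    (hab : |a - b| + 1 ≤ L) : ⌊a⌋ = ⌊b⌋ := by
  rw [ZMod.intCast_eq_intCast_iff_dvd_sub] at h
  have hlt : |((⌊b⌋ - ⌊a⌋ : ℤ) : ℝ)| < L := by
    have hab' := abs_le.1 (le_refl |a - b|)
    rw [abs_lt]
    push_cast
    constructor <;>
      linarith [Int.floor_le a, Int.lt_floor_add_one a, Int.floor_le b, Int.lt_floor_add_one b]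
  have := Int.eq_zero_of_abs_lt_dvd h (by exact_mod_cast hlt)
  omega

def levelCoord (k : ℕ) (x : ℝ^d) (j : Fin d) : ℤ := ⌊2 * (d + 1) * 2 ^ k * x j⌋

/-- At the level `k` of `dist x y`, the grid of mesh `2⁻ᵏ / (2 (d + 1))` is fine enough to
separate `x` from `y` and coarse enough that no wrap-around modulo `2 (d + 1) ^ 2 + 1` occurs. -/
lemma eq_of_forall_levelCoord_eq {x y : ℝ^d} (hx : x ∈ unitCube d) (hy : y ∈ unitCube d)
    (h : ∀ j, (levelCoord (levelOf (dist x y)) x j : ZMod (2 * (d + 1) ^ 2 + 1)) =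
      levelCoord (levelOf (dist x y)) y j) : x = y := by
  by_contra hxy
  set k := levelOf (dist x y)
  have hlt := scale_levelOf_lt (dist_pos.2 hxy)
  have hle := dist_le_mul_scale_levelOf hx hy
  set c : ℝ := 2 * (d + 1) * 2 ^ k
  have hc : 0 < c := by positivity
  have hcs : c * scale k = 2 * (d + 1) := by rw [mul_assoc, two_pow_mul_scale, mul_one]
  have hfloor : ∀ j, ⌊c * x j⌋ = ⌊c * y j⌋ := fun j => by
    refine floor_eq_floor_of_intCast_eq (h j) ?_
    rw [← mul_sub, abs_mul, abs_of_pos hc]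
    have := mul_le_mul_of_nonneg_left ((abs_sub_le_dist x y j).trans hle) hc.le
    push_cast
    nlinarith
  have hclose : ∀ j, |x j - y j| ≤ c⁻¹ := fun j => by
    have := Int.abs_sub_lt_one_of_floor_eq_floor (hfloor j)
    rw [← mul_sub, abs_mul, abs_of_pos hc] at this
    refine le_of_mul_le_mul_left ?_ hc
    rw [mul_inv_cancel₀ hc.ne']
    exact this.le
  have hcD : c * dist x y ≤ d + 1 :=
    calc c * dist x y ≤ c * (√d * c⁻¹) := by
          gcongr; exact dist_le_sqrt_mul (by positivity) hclose
      _ = √d := by field_simp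
      _ ≤ d + 1 := sqrt_le_succ d
  nlinarith [mul_lt_mul_of_pos_left hlt hc]

def tierRadius (d T t : ℕ) : ℝ := d + 1 + t * scale T

lemma tierRadius_mono {d T t t' : ℕ} (h : t ≤ t') : tierRadius d T t ≤ tierRadius d T t' := by
  unfold tierRadius
  gcongr
  exact (scale_pos T).le

lemma le_tierRadius (d T t : ℕ) : (d : ℝ) + 1 ≤ tierRadius d T t :=
  le_add_of_nonneg_right (mul_nonneg (Nat.cast_nonneg t) (scale_pos T).le)

lemma tierRadius_le {d T t : ℕ} (h : t ≤ T) : tierRadius d T t ≤ d + 2 := by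
  have : (t : ℝ) * scale T ≤ T * scale T := by gcongr; exact (scale_pos T).le
  linarith [mul_scale_le_one T, show tierRadius d T t = d + 1 + t * scale T from rfl]

/-- As `s < k = levelOf (dist x y)` and `s ≡ k (mod T)`, the scale `s` is at least `T` levels
coarser than `k`, so `dist x y ≤ 2⁻ᵀ 2⁻ˢ`. -/
lemma HasHole.tierRadius_succ {E : Set (ℝ^d)} {ε : ℝ} {T t s : ℕ} {x y : ℝ^d}
    (hs : s < levelOf (dist x y)) (hmod : s % T = levelOf (dist x y) % T)
    (h : HasHole E ε (tierRadius d T t) s x) : HasHole E ε (tierRadius d T (t + 1)) s y := by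
  have hsT : s + T ≤ levelOf (dist x y) := by
    have := Nat.le_of_dvd (by omega) ((Nat.modEq_iff_dvd' hs.le).1 hmod)
    omega
  have hD : dist x y ≤ scale T * scale s :=
    calc dist x y ≤ scale (levelOf (dist x y)) := le_scale_levelOf_of_pos (by omega)
      _ ≤ scale (s + T) := scale_anti hsT
      _ = scale T * scale s := by rw [scale_add, mul_comm]
  convert h.of_dist_le hD using 2
  simp only [tierRadius, Nat.cast_succ]
  ring

def tierClass (E : Set (ℝ^d)) (ε : ℝ) (T : ℕ) (x : ℝ^d) (ρ t : ℕ) : Set ℕ :=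
  {s | HasHole E ε (tierRadius d T t) s x ∧ s % T = ρ}

lemma mem_tierClass {E : Set (ℝ^d)} {ε : ℝ} {T : ℕ} {x : ℝ^d} {ρ t s : ℕ} :
    s ∈ tierClass E ε T x ρ t ↔ HasHole E ε (tierRadius d T t) s x ∧ s % T = ρ := Iff.rfl

abbrev Palette (d N : ℕ) : Type :=
  Fin (2 * N) × Fin (2 * N + 1) × Fin N → Fin d → ZMod (2 * (d + 1) ^ 2 + 1)

/-- The colour of `x` records, for every residue `ρ` modulo `T = 2N`, tier `t ≤ T` and rank
`i < N`, the coarse position of `x` at the `i`-th scale of its tier-`t` holes in the class `ρ`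
(`Nat.nth` returns junk `0` beyond the last one; those entries are never compared). -/
def colour (E : Set (ℝ^d)) (ε : ℝ) (N : ℕ) (x : ℝ^d) : Palette d N := fun q j =>
  levelCoord (Nat.nth (· ∈ tierClass E ε (2 * N) x q.1 q.2.1) q.2.2) x j

open scoped Classical in
def lowerHoles (E : Set (ℝ^d)) (ε : ℝ) (T : ℕ) (z : ℝ^d) (k t : ℕ) : Finset ℕ :=
  (Finset.range k).filter (· ∈ tierClass E ε T z (k % T) t)

lemma card_lowerHoles_lt {E : Set (ℝ^d)} {ε : ℝ} {N T k t : ℕ} {z : ℝ^d}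
    (hz : (holeScales E ε (d + 2) z).encard < N) (ht : t ≤ T) :
    (lowerHoles E ε T z k t).card < N := by
  refine Nat.cast_lt.1 (lt_of_le_of_lt ?_ hz)
  rw [← encard_coe_eq_coe_finsetCard]
  refine encard_le_encard fun s hs => ?_
  simp only [lowerHoles, Finset.coe_filter, mem_ofPred_eq, mem_tierClass] at hs
  exact hs.2.1.mono (tierRadius_le ht)

lemma lowerHoles_union_subset {E : Set (ℝ^d)} {ε : ℝ} {T t : ℕ} {x y : ℝ^d} :
    lowerHoles E ε T x (levelOf (dist x y)) t ∪ lowerHoles E ε T y (levelOf (dist x y)) t ⊆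
      lowerHoles E ε T x (levelOf (dist x y)) (t + 1) ∩
        lowerHoles E ε T y (levelOf (dist x y)) (t + 1) := by
  intro s hs
  simp only [lowerHoles, Finset.mem_union, Finset.mem_inter, Finset.mem_filter, Finset.mem_range,
    mem_tierClass] at hs ⊢
  have hmono := tierRadius_mono (d := d) (T := T) (Nat.le_succ t)
  rcases hs with ⟨hsk, hhole, hmod⟩ | ⟨hsk, hhole, hmod⟩
  · exact ⟨⟨hsk, hhole.mono hmono, hmod⟩, hsk, hhole.tierRadius_succ hsk hmod, hmod⟩
  · have hhole' := hhole.tierRadius_succ (y := x) (by rwa [dist_comm]) (by rwa [dist_comm])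
    exact ⟨⟨hsk, hhole', hmod⟩, hsk, hhole.mono hmono, hmod⟩

/-- The tiers only grow and hold fewer than `2 N` scales in all, so two consecutive ones agree,
and then the union of the next tier of `x` and of `y` lies in their intersection. -/
lemma exists_lowerHoles_eq {E : Set (ℝ^d)} {ε : ℝ} {N : ℕ} {x y : ℝ^d}
    (hxN : (holeScales E ε (d + 2) x).encard < N) (hyN : (holeScales E ε (d + 2) y).encard < N) :
    ∃ t < 2 * N, lowerHoles E ε (2 * N) x (levelOf (dist x y)) (t + 1) =
      lowerHoles E ε (2 * N) y (levelOf (dist x y)) (t + 1) := by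
  set A := lowerHoles E ε (2 * N) x (levelOf (dist x y))
  set B := lowerHoles E ε (2 * N) y (levelOf (dist x y))
  obtain ⟨t, htT, heq⟩ := exists_eq_succ_of_subset_of_card_lt (D := fun t => A t ∪ B t)
    (n := 2 * N) (fun t _ => lowerHoles_union_subset.trans
      (Finset.inter_subset_left.trans Finset.subset_union_left))
    ((Finset.card_union_le _ _).trans_lt (by
      have hA : (A (2 * N)).card < N := card_lowerHoles_lt hxN le_rfl
      have hB : (B (2 * N)).card < N := card_lowerHoles_lt hyN le_rfl
      omega))
  have h : A (t + 1) ∪ B (t + 1) ⊆ A (t + 1) ∩ B (t + 1) := heq ▸ lowerHoles_union_subset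
  exact ⟨t, htT, subset_antisymm
    ((Finset.subset_union_left.trans h).trans Finset.inter_subset_right)
    ((Finset.subset_union_right.trans h).trans Finset.inter_subset_left)⟩

lemma nth_card_lowerHoles {E : Set (ℝ^d)} {ε : ℝ} {T k t : ℕ} {z : ℝ^d}
    (hz : HasHole E ε (d + 1) k z) :
    Nat.nth (· ∈ tierClass E ε T z (k % T) t) (lowerHoles E ε T z k t).card = k := by
  classical
  rw [lowerHoles, ← Nat.count_eq_card_filter_range]
  exact Nat.nth_count (mem_tierClass.2 ⟨hz.mono (le_tierRadius d T t), rfl⟩)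

/-- At a tier where `x` and `y` have the same holes below `k = levelOf (dist x y)` in the class of
`k`, the scale `k` has the same rank for both, so equal colours give equal positions at scale `k`.
-/
lemma eq_of_colour_eq {E : Set (ℝ^d)} {ε : ℝ} {N : ℕ} {x y : ℝ^d} (hx : x ∈ unitCube d)
    (hy : y ∈ unitCube d) (hxN : (holeScales E ε (d + 2) x).encard < N)
    (hyN : (holeScales E ε (d + 2) y).encard < N)
    (hhx : HasHole E ε (d + 1) (levelOf (dist x y)) x)
    (hhy : HasHole E ε (d + 1) (levelOf (dist x y)) y) (h : colour E ε N x = colour E ε N y) :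
    x = y := by
  obtain ⟨t, htT, heq⟩ := exists_lowerHoles_eq hxN hyN
  have hN : 0 < N := by exact_mod_cast pos_of_gt hxN
  have hi := card_lowerHoles_lt (k := levelOf (dist x y)) (t := t + 1) hxN htT
  refine eq_of_forall_levelCoord_eq hx hy fun j => ?_
  have := congrFun (congrFun h (⟨levelOf (dist x y) % (2 * N), Nat.mod_lt _ (by omega)⟩,
    ⟨t + 1, by omega⟩, ⟨_, hi⟩)) j
  simp only [colour] at this
  rwa [nth_card_lowerHoles hhx, heq, nth_card_lowerHoles hhy] at this

lemma wellConnectedIn_colourClass {E : Set (ℝ^d)} (hE : E ⊆ unitCube d) {δ : ℝ} (hδ : 0 < δ)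
    (hδ1 : δ ≤ 1) (N : ℕ) (c : Palette d N) :
    WellConnectedIn δ {x | x ∈ E ∧ (holeScales E (δ ^ 2 / 16) (d + 2) x).encard < N ∧
      colour E (δ ^ 2 / 16) N x = c} E := by
  rintro x ⟨hxE, hxN, rfl⟩ y ⟨hyE, hyN, hxy⟩
  rcases eq_or_ne x y with rfl | hne
  · exact .refl hxE (by rw [dist_self, mul_zero])
  by_cases hhx : HasHole E (δ ^ 2 / 16) (d + 1) (levelOf (dist x y)) x
  · by_cases hhy : HasHole E (δ ^ 2 / 16) (d + 1) (levelOf (dist x y)) y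
    · exact absurd (eq_of_colour_eq (hE hxE) (hE hyE) hxN hyN hhx hhy hxy.symm) hne
    · have hchain := isChainFromTo_of_not_hasHole hE hδ hδ1 hyE hxE hne.symm
        (by rwa [dist_comm])
      rw [dist_comm] at hchain
      exact hchain.symm
  · exact isChainFromTo_of_not_hasHole hE hδ hδ1 hxE hyE hne hhx

end QuantitativeConnectivity

open QuantitativeConnectivity

/-- **Quantitative connectivity.** Given `d`, `α > 0`, `δ > 0`, there is `M ∈ ℕ` depending
only on `d`, `α`, `δ`, such that every `E ⊆ [0,1]^d` decomposes as
`E = F₁ ∪ … ∪ F_M ∪ Z` with Lebesgue outer measure of `Z` less than `α` and each `F i`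
`δ`-well-connected in `E`. -/
theorem quantitative_connectivity (d : ℕ) (α δ : ℝ) (hα : 0 < α) (hδ : 0 < δ) :
    ∃ M : ℕ, ∀ E : Set (EuclideanSpace ℝ (Fin d)), E ⊆ unitCube d →
      ∃ (F : Fin M → Set (EuclideanSpace ℝ (Fin d))) (Z : Set (EuclideanSpace ℝ (Fin d))),
        (∀ i, F i ⊆ E) ∧ Z ⊆ E ∧
        E = (⋃ i, F i) ∪ Z ∧
        volume Z < ENNReal.ofReal α ∧
        ∀ i, WellConnectedIn δ (F i) E := by
  set ε := min δ 1 ^ 2 / 16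
  have hδ₀ : 0 < min δ 1 := lt_min hδ one_pos
  obtain ⟨N, hN⟩ := exists_volume_setOf_holeScales_lt d (ε := ε) (R := d + 2) (by positivity) hα
  let e := Fintype.equivFin (Palette d N)
  refine ⟨Fintype.card (Palette d N), fun E hE => ⟨fun j => {x | x ∈ E ∧
      (holeScales E ε (d + 2) x).encard < N ∧ colour E ε N x = e.symm j},
    {x | x ∈ E ∧ (N : ℕ∞) ≤ (holeScales E ε (d + 2) x).encard}, fun j x hx => hx.1,
    fun x hx => hx.1, ?_, hN E hE, fun j =>
      (wellConnectedIn_colourClass hE hδ₀ (min_le_right δ 1) N _).mono (min_le_left δ 1)⟩⟩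
  ext x
  simp only [Set.mem_union, Set.mem_iUnion, Set.mem_ofPred_eq]
  refine ⟨fun hx => ?_, by rintro (⟨j, hx, -⟩ | ⟨hx, -⟩) <;> exact hx⟩
  rcases lt_or_ge (holeScales E ε (d + 2) x).encard N with h | h
  · exact Or.inl ⟨e (colour E ε N x), hx, h, (e.symm_apply_apply _).symm⟩
  · exact Or.inr ⟨hx, h⟩
end
end
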